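/- arXiv:2510.17435 — 10 statements merged into one kernel-verified Lean document; each statement's English description precedes it below -/
import Mathlib

section
/- Two pair analysis: for every instance of 5 agents in which agents 1 and 2 share a location and agents 4 and 5 share a location (gap vector d = (0, s, t, 0, 1 − s − t) with s ≥ 0, t ≥ 0, s + t ≤ 1), the expected social cost of PCD is at most (7 − 4√2) times the optimal social cost: PCD ≤ (7 − 4√2) · OPT. -/
open Finset

set_option maxHeartbeats 1000000

noncomputable def m (z : ℝ) : ℝ := |z - round z|

lemma m_coe (z : ℝ) : ‖(z : AddCircle (1:ℝ))‖ = m z := by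
  rw [AddCircle.norm_eq]; simp [m]

lemma m_neg (z : ℝ) : m (-z) = m z := by
  rw [← m_coe, ← m_coe z, AddCircle.coe_neg, norm_neg]

lemma dist_coe (x y : ℝ) :
    dist (x : AddCircle (1:ℝ)) (y : AddCircle (1:ℝ)) = m (y - x) := by
  rw [dist_eq_norm, ← AddCircle.coe_sub, m_coe, show x - y = -(y-x) by ring, m_neg]

lemma m_sub_int (z : ℝ) (n : ℤ) : m (z - n) = m z := by
  unfold m
  rw [round_sub_intCast]
  push_cast
  ring_nf

lemma m_nonneg (z : ℝ) : 0 ≤ m z := abs_nonneg _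

lemma m_eval {z : ℝ} (h0 : 0 ≤ z) (h1 : z ≤ 1) : m z = min z (1 - z) := by
  unfold m
  rcases lt_or_ge z (1/2) with h | h
  · have hr : round z = 0 := by
      rw [round_eq, Int.floor_eq_zero_iff]
      constructor <;> simp <;> linarith
    rw [hr]
    rw [min_eq_left (by linarith)]
    simp [abs_of_nonneg h0]
  · have hr : round z = 1 := by
      rw [round_eq, Int.floor_eq_iff]
      push_cast
      constructor <;> linarith
    rw [hr, min_eq_right (by linarith)]
    push_cast
    rw [abs_of_nonpos (by linarith)]
    ring

lemma m_add_one (z : ℝ) : m (z + 1) = m z := by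
  have := m_sub_int (z + 1) 1
  simpa using this.symm

lemma key1aux (s t y : ℝ) (hs : 0 ≤ s) (ht : 0 ≤ t) (hst : s + t ≤ 1)
    (hy0 : 0 ≤ y) (hy1 : y ≤ 1) :
    min (m s + 2 * m (s+t)) (min (2 * m s + 2 * m t) (2 * m (s+t) + m t)) ≤
      2 * m y + m (y - s) + 2 * m (y - (s+t)) := by
  have hms : m s = min s (1 - s) := m_eval hs (by linarith)
  have hmt : m t = min t (1 - t) := m_eval ht (by linarith)
  have hmq : m (s+t) = min (s+t) (1 - (s+t)) := m_eval (by linarith) (by linarith)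
  have hmy : m y = min y (1 - y) := m_eval hy0 hy1
  rcases le_total y s with h1 | h1
  · have e1 : m (y - s) = min (y - s + 1) (1 - (y - s + 1)) := by
      rw [← m_add_one, m_eval (by linarith) (by linarith)]
    have e2 : m (y - (s+t)) = min (y - (s+t) + 1) (1 - (y - (s+t) + 1)) := by
      rw [← m_add_one, m_eval (by linarith) (by linarith)]
    refine le_trans (min_le_min (le_refl _) (min_le_left _ _)) ?_
    rw [hms, hmt, hmq, hmy, e1, e2]
    clear hms hmt hmq hmy e1 e2
    simp only [min_def]
    split_ifs <;> linarith
  · rcases le_total y (s+t) with h2 | h2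
    · have e1 : m (y - s) = min (y - s) (1 - (y - s)) := m_eval (by linarith) (by linarith)
      have e2 : m (y - (s+t)) = min (y - (s+t) + 1) (1 - (y - (s+t) + 1)) := by
        rw [← m_add_one, m_eval (by linarith) (by linarith)]
      refine le_trans (min_le_right _ _) ?_
      rw [hms, hmt, hmq, hmy, e1, e2]
      clear hms hmt hmq hmy e1 e2
      simp only [min_def]
      split_ifs <;> linarith
    · have e1 : m (y - s) = min (y - s) (1 - (y - s)) := m_eval (by linarith) (by linarith)
      have e2 : m (y - (s+t)) = min (y - (s+t)) (1 - (y - (s+t))) :=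
        m_eval (by linarith) (by linarith)
      refine le_trans (min_le_min (le_refl _) (min_le_right _ _)) ?_
      rw [hms, hmt, hmq, hmy, e1, e2]
      clear hms hmt hmq hmy e1 e2
      simp only [min_def]
      split_ifs <;> linarith

lemma key2 (s t : ℝ) (hs : 0 ≤ s) (ht : 0 ≤ t) (hst : s + t ≤ 1) :
    t * (m s + 2 * m (s+t)) + (1 - s - t) * (2 * m s + 2 * m t)
      + s * (2 * m (s+t) + m t) ≤
    (7 - 4 * Real.sqrt 2) *
      min (m s + 2 * m (s+t)) (min (2 * m s + 2 * m t) (2 * m (s+t) + m t)) := by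
  have h2 : Real.sqrt 2 * Real.sqrt 2 = 2 := Real.mul_self_sqrt (by norm_num)
  have hge : (1.414 : ℝ) ≤ Real.sqrt 2 := by nlinarith [Real.sqrt_nonneg 2]
  have hle : Real.sqrt 2 ≤ 1.415 := by nlinarith [Real.sqrt_nonneg 2]
  have hms : m s = min s (1 - s) := m_eval hs (by linarith)
  have hmt : m t = min t (1 - t) := m_eval ht (by linarith)
  have hmq : m (s+t) = min (s+t) (1 - (s+t)) := m_eval (by linarith) (by linarith)
  rw [hms, hmt, hmq]; clear hms hmt hmq
  rcases le_total (s+t) (1/2) with hq | hq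
  · -- Region I : everything small, min = C2
    rw [min_eq_left (by linarith : s ≤ 1 - s), min_eq_left (by linarith : t ≤ 1 - t),
      min_eq_left (by linarith : s + t ≤ 1 - (s+t)),
      min_eq_left (by linarith : 2*s + 2*t ≤ 2*(s+t) + t),
      min_eq_right (by linarith : 2*s + 2*t ≤ s + 2*(s+t))]
    nlinarith [sq_nonneg (s - t), mul_nonneg (by linarith : (0:ℝ) ≤ s + t) (by linarith : (0:ℝ) ≤ 1/2 - (s+t))]
  · rw [min_eq_right (by linarith : 1 - (s+t) ≤ s + t)]
    rcases le_total t (1/2) with ht2 | ht2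
    · rcases le_total s (1/2) with hs2 | hs2
      · -- Region II
        rw [min_eq_left (by linarith : s ≤ 1 - s), min_eq_left (by linarith : t ≤ 1 - t)]
        rcases le_total (2*s + 2*t) (2*(1-(s+t)) + t) with h24 | h24
        · rw [min_eq_left h24]
          rcases le_total (s + 2*(1-(s+t))) (2*s + 2*t) with h02 | h02
          · rw [min_eq_left h02]
            nlinarith [sq_nonneg (2*s - 2 + Real.sqrt 2 - 3/4*(1-2*t)), sq_nonneg (1-2*t)]
          · rw [min_eq_right h02]
            nlinarith [mul_nonneg hs ht, sq_nonneg (s-t), mul_nonneg hs (by linarith : (0:ℝ) ≤ 1 - s - t), mul_nonneg ht (by linarith : (0:ℝ) ≤ 1 - s - t)]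
        · rw [min_eq_right h24]
          rcases le_total (s + 2*(1-(s+t))) (2*(1-(s+t)) + t) with h04 | h04
          · rw [min_eq_left h04]
            nlinarith [sq_nonneg (2*s - 2 + Real.sqrt 2 - 3/4*(1-2*t)), sq_nonneg (1-2*t)]
          · rw [min_eq_right h04]
            nlinarith [sq_nonneg (2*t - 2 + Real.sqrt 2 - 3/2*(1/2-s)), sq_nonneg (1/2-s)]
      · -- Region IV : s > 1/2
        rw [min_eq_right (by linarith : 1 - s ≤ s), min_eq_left (by linarith : t ≤ 1 - t)]
        rcases le_total (2*(1-(s+t)) + t) ((1-s) + 2*(1-(s+t))) with h40 | h40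
        · rw [min_eq_right (by linarith : 2*(1-(s+t)) + t ≤ 2*(1-s) + 2*t),
            min_eq_right h40]
          have e4 : Real.sqrt 2 * Real.sqrt 2 * ((s-1/2)*(s-1/2))
              = 2*((s-1/2)*(s-1/2)) := by rw [h2]
          nlinarith [e4, sq_nonneg (2*t - 2 + Real.sqrt 2 + (4-2*Real.sqrt 2)*(s-1/2)),
            mul_nonneg (mul_nonneg (by linarith : (0:ℝ) ≤ 12 - 8*Real.sqrt 2)
              (by linarith : (0:ℝ) ≤ s - 1/2)) (by linarith : (0:ℝ) ≤ t + 2*(1-s-t))]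
        · -- u ≤ 0 degenerate
          have hu : 1 - s - t ≤ 0 := by linarith
          rcases le_total (2*(1-s) + 2*t) (2*(1-(s+t)) + t) with h24 | h24
          · rw [min_eq_left h24, min_eq_right (by linarith : 2*(1-s) + 2*t ≤ (1-s) + 2*(1-(s+t)))]
            nlinarith [mul_nonneg hs ht, mul_nonneg ht ht]
          · rw [min_eq_right h24, min_eq_left h40]
            nlinarith [mul_nonneg hs ht, mul_nonneg ht ht]
    · -- Region III : t > 1/2, min = C0
      have hs2 : s ≤ 1/2 := by linarith
      rw [min_eq_left (by linarith : s ≤ 1 - s), min_eq_right (by linarith : 1 - t ≤ t),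
        min_eq_left (le_min (by linarith) (by linarith))]
      have e3 : Real.sqrt 2 * Real.sqrt 2 * ((t-1/2)*(t-1/2))
          = 2*((t-1/2)*(t-1/2)) := by rw [h2]
      nlinarith [e3, sq_nonneg (2*s - 2 + Real.sqrt 2 + (4-2*Real.sqrt 2)*(t-1/2)),
        mul_nonneg (mul_nonneg (by linarith : (0:ℝ) ≤ 12 - 8*Real.sqrt 2)
          (by linarith : (0:ℝ) ≤ t - 1/2)) (by linarith : (0:ℝ) ≤ s + 2*(1-s-t))]

lemma m_zero : m 0 = 0 := by simp [m]

lemma key1 (s t y : ℝ) (hs : 0 ≤ s) (ht : 0 ≤ t) (hst : s + t ≤ 1) :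
    min (m s + 2 * m (s+t)) (min (2 * m s + 2 * m t) (2 * m (s+t) + m t)) ≤
      2 * m y + m (y - s) + 2 * m (y - (s+t)) := by
  have h := key1aux s t (Int.fract y) hs ht hst (Int.fract_nonneg y)
    (le_of_lt (Int.fract_lt_one y))
  have e0 : m (Int.fract y) = m y := by
    rw [Int.fract, show y - ↑⌊y⌋ = y - (⌊y⌋ : ℤ) from rfl, m_sub_int]
  have e1 : m (Int.fract y - s) = m (y - s) := by
    rw [Int.fract, show y - ↑⌊y⌋ - s = (y - s) - (⌊y⌋ : ℤ) by ring, m_sub_int]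
  have e2 : m (Int.fract y - (s+t)) = m (y - (s+t)) := by
    rw [Int.fract, show y - ↑⌊y⌋ - (s+t) = (y - (s+t)) - (⌊y⌋ : ℤ) by ring, m_sub_int]
  rw [e0, e1, e2] at h
  exact h



/-- Position of agent `i` on the unit circle: the image of the partial sum
`∑_{j < i} d j`, so that `d i` is the clockwise arc from agent `i` to agent `i+1`. -/
noncomputable def pos (d : Fin 5 → ℝ) (i : Fin 5) : AddCircle (1 : ℝ) :=
  ((∑ j ∈ Finset.Iio i, d j : ℝ) : AddCircle (1 : ℝ))

/-- Social cost of placing the facility at `a`. -/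
noncomputable def SC (d : Fin 5 → ℝ) (a : AddCircle (1 : ℝ)) : ℝ :=
  ∑ i : Fin 5, dist (pos d i) a

/-- Social cost of placing the facility at agent `i`'s location. -/
noncomputable def C (d : Fin 5 → ℝ) (i : Fin 5) : ℝ := SC d (pos d i)

/-- The optimal social cost. -/
noncomputable def OPT (d : Fin 5 → ℝ) : ℝ := ⨅ a : AddCircle (1 : ℝ), SC d a

/-- The length of the arc facing agent `i` (indices mod 5). -/
noncomputable def P (d : Fin 5 → ℝ) (i : Fin 5) : ℝ := d (i + 2)

/-- Expected social cost of the PCD mechanism. -/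
noncomputable def PCD (d : Fin 5 → ℝ) : ℝ := ∑ i : Fin 5, P d i * C d i
theorem two_pair_analysis (s t : ℝ) (hs : 0 ≤ s) (ht : 0 ≤ t) (hst : s + t ≤ 1)
    (d : Fin 5 → ℝ) (hd : d = ![0, s, t, 0, 1 - s - t]) :
    PCD d ≤ (7 - 4 * Real.sqrt 2) * OPT d := by
  subst hd
  set d : Fin 5 → ℝ := ![0, s, t, 0, 1 - s - t] with hd
  have hp0 : pos d 0 = ((0:ℝ) : AddCircle (1:ℝ)) := by
    have h : Finset.Iio (0 : Fin 5) = ∅ := by decide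
    simp [pos, h]
  have hp1 : pos d 1 = ((0:ℝ) : AddCircle (1:ℝ)) := by
    have h : Finset.Iio (1 : Fin 5) = {0} := by decide
    simp [pos, h, hd]
  have hp2 : pos d 2 = ((s:ℝ) : AddCircle (1:ℝ)) := by
    have h : Finset.Iio (2 : Fin 5) = {0, 1} := by decide
    simp [pos, h, hd]
  have hp3 : pos d 3 = ((s + t : ℝ) : AddCircle (1:ℝ)) := by
    have h : Finset.Iio (3 : Fin 5) = {0, 1, 2} := by decide
    simp [pos, h, hd]
  have hp4 : pos d 4 = ((s + t : ℝ) : AddCircle (1:ℝ)) := by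
    have h : Finset.Iio (4 : Fin 5) = {0, 1, 2, 3} := by decide
    have h2 : d 3 = 0 := by simp [hd]
    simp [pos, h, hd]
  have hSC : ∀ y : ℝ, SC d ((y:ℝ) : AddCircle (1:ℝ))
      = 2 * m y + m (y - s) + 2 * m (y - (s+t)) := by
    intro y
    simp only [SC, Fin.sum_univ_five, hp0, hp1, hp2, hp3, hp4, dist_coe, sub_zero]
    ring
  have hC0 : C d 0 = m s + 2 * m (s+t) := by
    rw [C, hp0, hSC 0]
    rw [show (0:ℝ) - s = -s by ring, show (0:ℝ) - (s+t) = -(s+t) by ring, m_neg, m_neg,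
      m_zero]
    ring
  have hC2 : C d 2 = 2 * m s + 2 * m t := by
    rw [C, hp2, hSC s]
    rw [sub_self, show s - (s+t) = -t by ring, m_neg, m_zero]
    ring
  have hC4 : C d 4 = 2 * m (s+t) + m t := by
    rw [C, hp4, hSC (s+t)]
    rw [sub_self, show s + t - s = t by ring, m_zero]
    ring
  have hC1 : C d 1 = C d 0 := by rw [C, C, hp0, hp1]
  have hPCD : PCD d = t * C d 0 + (1 - s - t) * C d 2 + s * C d 4 := by
    simp only [PCD, Fin.sum_univ_five, P]
    have h02 : ((0:Fin 5) + 2) = 2 := by decide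
    have h12 : ((1:Fin 5) + 2) = 3 := by decide
    have h22 : ((2:Fin 5) + 2) = 4 := by decide
    have h32 : ((3:Fin 5) + 2) = 0 := by decide
    have h42 : ((4:Fin 5) + 2) = 1 := by decide
    rw [h02, h12, h22, h32, h42]
    have e0 : d 0 = 0 := by simp [hd]
    have e1 : d 1 = s := by simp [hd]
    have e2 : d 2 = t := by simp [hd]
    have e3 : d 3 = 0 := by simp [hd]
    have e4 : d 4 = 1 - s - t := by simp [hd]
    rw [e0, e1, e2, e3, e4]
    ring
  have hOPT : min (m s + 2 * m (s+t)) (min (2 * m s + 2 * m t) (2 * m (s+t) + m t))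
      ≤ OPT d := by
    apply le_ciInf
    intro a
    refine QuotientAddGroup.induction_on a ?_
    intro y
    rw [hSC y]
    exact key1 s t y hs ht hst
  have hr : (0:ℝ) ≤ 7 - 4 * Real.sqrt 2 := by
    nlinarith [Real.sq_sqrt (by norm_num : (2:ℝ) ≥ 0), Real.sqrt_nonneg 2]
  calc PCD d = t * (m s + 2 * m (s+t)) + (1 - s - t) * (2 * m s + 2 * m t)
        + s * (2 * m (s+t) + m t) := by rw [hPCD, hC0, hC2, hC4]
    _ ≤ (7 - 4 * Real.sqrt 2) *
        min (m s + 2 * m (s+t)) (min (2 * m s + 2 * m t) (2 * m (s+t) + m t)) :=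
      key2 s t hs ht hst
    _ ≤ (7 - 4 * Real.sqrt 2) * OPT d := mul_le_mul_of_nonneg_left hOPT hr
end

section
/- Two pair analysis, case A: for every 5-agent two-pair instance with gap vector d = (0, s, t, 0, 1 − s − t), where 0 ≤ s ≤ t and t ≤ 1 − t − s (the largest arc faces the lone agent), the expected social cost of PCD is at most 9/8 times the optimal social cost: PCD ≤ (9/8) · OPT. -/
open Finset

section pcd_helpers

lemma pcdAux_coe_sub_one (z : ℝ) : ((z : ℝ) : AddCircle (1:ℝ)) = ((z - 1 : ℝ) : AddCircle (1:ℝ)) := by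
  have h : ((z - 1 : ℝ) : AddCircle (1:ℝ)) = ↑z - ↑(1:ℝ) := QuotientAddGroup.mk_sub _ _ _
  have h2 : ((1:ℝ) : AddCircle (1:ℝ)) = 0 := AddCircle.coe_period 1
  rw [h, h2, sub_zero]

lemma pcdAux_norm_half (z : ℝ) (h0 : 0 ≤ z) (h1 : z ≤ 1/2) : ‖((z:ℝ) : AddCircle (1:ℝ))‖ = z := by
  rw [(AddCircle.norm_coe_eq_abs_iff 1 one_ne_zero).2 (by rw [abs_of_nonneg h0, abs_one]; linarith),
    abs_of_nonneg h0]

lemma pcdAux_coe_neg (z : ℝ) : ((-z : ℝ) : AddCircle (1:ℝ)) = -(↑z) := QuotientAddGroup.mk_neg _ _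

lemma pcdAux_norm_min (z : ℝ) (h0 : 0 ≤ z) (h1 : z ≤ 1) :
    ‖((z:ℝ) : AddCircle (1:ℝ))‖ = min z (1 - z) := by
  rcases le_total z (1/2) with h | h
  · rw [pcdAux_norm_half z h0 h, min_eq_left (by linarith)]
  · rw [pcdAux_coe_sub_one, ← norm_neg, ← pcdAux_coe_neg, neg_sub,
      pcdAux_norm_half (1-z) (by linarith) (by linarith), min_eq_right (by linarith)]

lemma pcdAux_norm_abs (z : ℝ) : ‖((z:ℝ) : AddCircle (1:ℝ))‖ = ‖((|z|:ℝ) : AddCircle (1:ℝ))‖ := by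
  rcases abs_cases z with ⟨h, _⟩ | ⟨h, _⟩
  · rw [h]
  · rw [h, pcdAux_coe_neg, norm_neg]

lemma pcdAux_dist_coe (x y : ℝ) (hx : 0 ≤ x) (hx1 : x ≤ 1) (hy : 0 ≤ y) (hy1 : y ≤ 1) :
    dist ((x:ℝ) : AddCircle (1:ℝ)) ((y : ℝ) : AddCircle (1:ℝ)) = min |x - y| (1 - |x - y|) := by
  rw [dist_eq_norm, ← QuotientAddGroup.mk_sub, pcdAux_norm_abs,
    pcdAux_norm_min _ (abs_nonneg _) (by rw [abs_sub_le_iff]; constructor <;> linarith)]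

lemma pcdAux_coe_fract (b : ℝ) : ((Int.fract b : ℝ) : AddCircle (1:ℝ)) = ↑b := by
  have h : ((b - (⌊b⌋ : ℝ) : ℝ) : AddCircle (1:ℝ)) = ↑b - ↑((⌊b⌋ : ℝ)) :=
    QuotientAddGroup.mk_sub _ _ _
  have h2 : (((⌊b⌋ : ℝ)) : AddCircle (1:ℝ)) = 0 :=
    (AddCircle.coe_eq_zero_iff 1).2 ⟨⌊b⌋, by simp⟩
  rw [Int.fract, h, h2, sub_zero]

set_option maxHeartbeats 1000000 in
lemma pcdAux_pointwise (s t f : ℝ) (hs : 0 ≤ s) (hst : s ≤ t) (ht : t ≤ 1 - t - s)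
    (hf0 : 0 ≤ f) (hf1 : f ≤ 1) :
    min (s + 2*min (s+t) (1-s-t)) (min (2*s+2*t) (t + 2*min (s+t) (1-s-t))) ≤
      2 * min |0 - f| (1 - |0 - f|) + min |s - f| (1 - |s - f|)
        + 2 * min |s + t - f| (1 - |s + t - f|) := by
  have hz : |0 - f| = f := by rw [zero_sub, abs_neg, abs_of_nonneg hf0]
  rw [hz]
  have hA := min_le_left (s + 2*min (s+t) (1-s-t))
    (min (2*s+2*t) (t + 2*min (s+t) (1-s-t)))
  have hB := (min_le_right (s + 2*min (s+t) (1-s-t))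
    (min (2*s+2*t) (t + 2*min (s+t) (1-s-t)))).trans (min_le_left _ _)
  have hC := (min_le_right (s + 2*min (s+t) (1-s-t))
    (min (2*s+2*t) (t + 2*min (s+t) (1-s-t)))).trans (min_le_right _ _)
  have hmu := min_le_right (s+t) (1-s-t)
  have hmw := min_le_left (s+t) (1-s-t)
  rcases le_total (s+t) (1-s-t) with hm | hm <;>
    [replace hm := min_eq_left hm; replace hm := min_eq_right hm] <;>
  rcases abs_cases (s - f) with ⟨e1, i1⟩ | ⟨e1, i1⟩ <;>
  rcases abs_cases (s + t - f) with ⟨e2, i2⟩ | ⟨e2, i2⟩ <;>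
  rcases min_cases f (1-f) with ⟨e3, i3⟩ | ⟨e3, i3⟩ <;>
  rcases min_cases |s - f| (1 - |s - f|) with ⟨e4, i4⟩ | ⟨e4, i4⟩ <;>
  rcases min_cases |s + t - f| (1 - |s + t - f|) with ⟨e5, i5⟩ | ⟨e5, i5⟩ <;>
  linarith

lemma pcdAux_alg1 (s t : ℝ) (hs : 0 ≤ s) (hst : s ≤ t) (h : s + t ≤ 1 - s - t) :
    t * (s + 2*(s+t)) + (1-s-t) * (2*s+2*t) + s * (t + 2*(s+t)) ≤ (9/8) * (2*s+2*t) := by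
  nlinarith [sq_nonneg (s - t),
    mul_nonneg (by linarith : (0:ℝ) ≤ s + t) (by linarith : (0:ℝ) ≤ 1 - 2*(s+t))]

lemma pcdAux_alg2a (s t : ℝ) (hs : 0 ≤ s) (hst : s ≤ t) (ht : t ≤ 1 - t - s)
    (h : 1 - s - t ≤ s + t) (h2 : s + 2*(1-s-t) ≤ 2*s+2*t) :
    t * (s + 2*(1-s-t)) + (1-s-t) * (2*s+2*t) + s * (t + 2*(1-s-t)) ≤
      (9/8) * (s + 2*(1-s-t)) := by
  nlinarith [sq_nonneg (32*s + 24*t - 17), sq_nonneg (8*t - 3)]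

lemma pcdAux_alg2b (s t : ℝ) (hs : 0 ≤ s) (hst : s ≤ t) (ht : t ≤ 1 - t - s)
    (h : 1 - s - t ≤ s + t) (h2 : 2*s+2*t ≤ s + 2*(1-s-t)) :
    t * (s + 2*(1-s-t)) + (1-s-t) * (2*s+2*t) + s * (t + 2*(1-s-t)) ≤ (9/8) * (2*s+2*t) := by
  nlinarith [sq_nonneg (s - t),
    mul_nonneg (by linarith : (0:ℝ) ≤ s + t) (by linarith : (0:ℝ) ≤ 2*(s+t) - 1)]

end pcd_helpers

theorem two_pair_case_A (s t : ℝ) (hs : 0 ≤ s) (hst : s ≤ t) (ht : t ≤ 1 - t - s)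
    (d : Fin 5 → ℝ) (hd : d = ![0, s, t, 0, 1 - s - t]) :
    PCD d ≤ (9 / 8) * OPT d := by
  have hs1 : s ≤ 1 := by linarith
  have hw0 : (0:ℝ) ≤ s + t := by linarith
  have hw1 : s + t ≤ 1 := by linarith
  -- positions
  have h0 : Finset.Iio (0 : Fin 5) = ∅ := by decide
  have h1 : Finset.Iio (1 : Fin 5) = {0} := by decide
  have h2 : Finset.Iio (2 : Fin 5) = {0, 1} := by decide
  have h3 : Finset.Iio (3 : Fin 5) = {0, 1, 2} := by decide
  have h4 : Finset.Iio (4 : Fin 5) = {0, 1, 2, 3} := by decide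
  have hp0 : pos d 0 = ((0:ℝ) : AddCircle (1:ℝ)) := by simp [pos, h0, hd]
  have hp1 : pos d 1 = ((0:ℝ) : AddCircle (1:ℝ)) := by simp [pos, h1, hd]
  have hp2 : pos d 2 = ((s:ℝ) : AddCircle (1:ℝ)) := by simp [pos, h2, hd]
  have hp3 : pos d 3 = ((s+t:ℝ) : AddCircle (1:ℝ)) := by simp [pos, h3, hd]
  have hp4 : pos d 4 = ((s+t:ℝ) : AddCircle (1:ℝ)) := by simp [pos, h4, hd]
  set m : ℝ := min (s+t) (1-s-t) with hm
  -- key distances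
  have d0s : dist ((0:ℝ) : AddCircle (1:ℝ)) ((s:ℝ) : AddCircle (1:ℝ)) = s := by
    rw [pcdAux_dist_coe 0 s le_rfl zero_le_one hs hs1,
      show |(0:ℝ) - s| = s from by rw [zero_sub, abs_neg, abs_of_nonneg hs],
      min_eq_left (by linarith)]
  have d0w : dist ((0:ℝ) : AddCircle (1:ℝ)) ((s+t:ℝ) : AddCircle (1:ℝ)) = m := by
    rw [pcdAux_dist_coe 0 (s+t) le_rfl zero_le_one hw0 hw1,
      show |(0:ℝ) - (s+t)| = s + t from by rw [zero_sub, abs_neg, abs_of_nonneg hw0]]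
    rw [hm, show (1:ℝ) - (s+t) = 1 - s - t from by ring]
  have dsw : dist ((s:ℝ) : AddCircle (1:ℝ)) ((s+t:ℝ) : AddCircle (1:ℝ)) = t := by
    rw [pcdAux_dist_coe s (s+t) hs hs1 hw0 hw1,
      show |s - (s+t)| = t from by rw [show s - (s+t) = -t from by ring, abs_neg,
        abs_of_nonneg (hs.trans hst)],
      min_eq_left (by linarith)]
  -- costs
  have hC0 : C d 0 = s + 2*m := by
    rw [C, SC, Fin.sum_univ_five, hp0, hp1, hp2, hp3, hp4, dist_self,
      dist_comm (((s:ℝ)) : AddCircle (1:ℝ)), d0s,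
      dist_comm (((s+t:ℝ)) : AddCircle (1:ℝ)), d0w]
    ring
  have hC2 : C d 2 = 2*s + 2*t := by
    rw [C, SC, Fin.sum_univ_five, hp0, hp1, hp2, hp3, hp4, dist_self, d0s,
      dist_comm (((s+t:ℝ)) : AddCircle (1:ℝ)), dsw]
    ring
  have hC4 : C d 4 = t + 2*m := by
    rw [C, SC, Fin.sum_univ_five, hp0, hp1, hp2, hp3, hp4, dist_self, d0w, dsw]
    ring
  -- probabilities
  have hP0 : P d 0 = t := by
    rw [P, show (0:Fin 5)+2 = 2 from by decide, hd]; norm_num; rfl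
  have hP1 : P d 1 = 0 := by
    rw [P, show (1:Fin 5)+2 = 3 from by decide, hd]; norm_num; rfl
  have hP2 : P d 2 = 1 - s - t := by
    rw [P, show (2:Fin 5)+2 = 4 from by decide, hd]; norm_num; rfl
  have hP3 : P d 3 = 0 := by
    rw [P, show (3:Fin 5)+2 = 0 from by decide, hd]; norm_num
  have hP4 : P d 4 = s := by
    rw [P, show (4:Fin 5)+2 = 1 from by decide, hd]; norm_num
  have hPCD : PCD d = t * (s + 2*m) + (1-s-t) * (2*s+2*t) + s * (t + 2*m) := by
    rw [PCD, Fin.sum_univ_five, hP0, hP1, hP2, hP3, hP4, hC0, hC2, hC4]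
    ring
  -- lower bound on OPT
  set L : ℝ := min (s + 2*m) (min (2*s+2*t) (t + 2*m)) with hL
  have hOPT : L ≤ OPT d := by
    refine le_ciInf fun a => ?_
    obtain ⟨b, rfl⟩ := QuotientAddGroup.mk_surjective a
    have hab : (QuotientAddGroup.mk b : AddCircle (1:ℝ))
        = ((Int.fract b : ℝ) : AddCircle (1:ℝ)) := (pcdAux_coe_fract b).symm
    rw [hab, SC, Fin.sum_univ_five, hp0, hp1, hp2, hp3, hp4]
    have hf0 := Int.fract_nonneg b
    have hf1 := (Int.fract_lt_one b).le
    rw [pcdAux_dist_coe 0 _ le_rfl zero_le_one hf0 hf1, pcdAux_dist_coe s _ hs hs1 hf0 hf1,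
      pcdAux_dist_coe (s+t) _ hw0 hw1 hf0 hf1]
    have hpb := pcdAux_pointwise s t (Int.fract b) hs hst ht hf0 hf1
    rw [hL, hm]
    linarith
  -- final algebra
  have hfin : t * (s + 2*m) + (1-s-t) * (2*s+2*t) + s * (t + 2*m) ≤ (9/8) * L := by
    rcases le_total (s+t) (1-s-t) with h | h
    · have hm' : m = s + t := min_eq_left h
      have hL' : L = 2*s+2*t := by
        rw [hL, hm', min_eq_left (show (2*s+2*t:ℝ) ≤ t + 2*(s+t) from by linarith),
          min_eq_right (show (2*s+2*t:ℝ) ≤ s + 2*(s+t) from by linarith)]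
      rw [hm', hL']
      exact pcdAux_alg1 s t hs hst h
    · have hm' : m = 1 - s - t := min_eq_right h
      rcases le_total (s + 2*(1-s-t)) (2*s+2*t) with h2 | h2
      · have hL' : L = s + 2*(1-s-t) := by
          rw [hL, hm', min_eq_left (le_min h2 (by linarith))]
        rw [hm', hL']
        exact pcdAux_alg2a s t hs hst ht h h2
      · have hL' : L = 2*s+2*t := by
          rw [hL, hm', min_eq_left (show (2*s+2*t:ℝ) ≤ t + 2*(1-s-t) from by linarith),
            min_eq_right (show (2*s+2*t:ℝ) ≤ s + 2*(1-s-t) from by linarith)]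
        rw [hm', hL']
        exact pcdAux_alg2b s t hs hst ht h h2
  calc PCD d = t * (s + 2*m) + (1-s-t) * (2*s+2*t) + s * (t + 2*m) := hPCD
    _ ≤ (9/8) * L := hfin
    _ ≤ (9/8) * OPT d := by linarith
end

section
/- If three of the five agents share the same location (gap vector with d 2 = 0 and d 3 = 0, so that x 2 = x 3 = x 4 using 1-based indexing x 1,…,x 5), then PCD is optimal on this instance: PCD = OPT. -/
open Finset

theorem three_agents_same_location (d : Fin 5 → ℝ) (hd : ∀ i, 0 ≤ d i)
    (hsum : ∑ i, d i = 1) (h2 : d 1 = 0) (h3 : d 2 = 0) :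
    PCD d = OPT d := by
  have hI1 : Finset.Iio (1 : Fin 5) = {0} := by decide
  have hI2 : Finset.Iio (2 : Fin 5) = {0, 1} := by decide
  have hI3 : Finset.Iio (3 : Fin 5) = {0, 1, 2} := by decide
  have e1 : pos d 2 = pos d 1 := by
    unfold pos; congr 1
    rw [hI1, hI2]
    simp [h2]
  have e2 : pos d 3 = pos d 1 := by
    unfold pos; congr 1
    rw [hI1, hI3]
    simp [h2, h3]
  set m := pos d 1 with hm
  set S := SC d m with hS
  have hlb : ∀ a : AddCircle (1 : ℝ), S ≤ SC d a := by
    intro a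
    simp only [hS, SC, Fin.sum_univ_five, e1, e2]
    have t1 := dist_triangle (pos d 0) a m
    have t2 := dist_triangle (pos d 4) a m
    have h0 : dist m a = dist a m := dist_comm m a
    have hn : (0 : ℝ) ≤ dist m a := dist_nonneg
    simp only [dist_self]
    rw [← hm, dist_self]
    linarith
  have hbdd : BddBelow (Set.range fun a => SC d a) := by
    refine ⟨0, ?_⟩
    rintro x ⟨a, rfl⟩
    exact Finset.sum_nonneg fun i _ => dist_nonneg
  have hOPT : OPT d = S := by
    refine le_antisymm (ciInf_le hbdd m) (le_ciInf hlb)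
  have hsum5 : d 0 + d 3 + d 4 = 1 := by
    rw [Fin.sum_univ_five] at hsum
    linarith
  have hC1 : C d 1 = S := rfl
  have hC2 : C d 2 = S := by unfold C; rw [e1]
  have hC3 : C d 3 = S := by unfold C; rw [e2]
  have hP : PCD d = d 2 * C d 0 + d 3 * C d 1 + d 4 * C d 2 + d 0 * C d 3 + d 1 * C d 4 := by
    simp only [PCD, P, Fin.sum_univ_five, Fin.reduceAdd]
  rw [hP, hOPT, hC1, hC2, hC3, h2, h3]
  linear_combination S * hsum5
end

section
/- Instances with a large arc: for every instance of 5 agents such that some arc has length at least 1/2 (i.e., P i = d (i+2) ≥ 1/2 for some i), the expected social cost of PCD is at most (7 − 4√2) times the optimal social cost: PCD ≤ (7 − 4√2) · OPT. -/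
open Finset

lemma scalar_key (a b c e r : ℝ) (ha : 0 ≤ a) (hb : 0 ≤ b) (hc : 0 ≤ c) (he : 0 ≤ e)
    (hs : a+b+c+e ≤ 1/2) (hr : r^2 = 2) (hr0 : 1 ≤ r) (hr1 : r ≤ 23/16) :
    2*(2*a*c + b*c + 2*b*e) ≤ (6-4*r)*(a+2*b+2*c+e) := by
  have hu : (0:ℝ) ≤ 3-2*r := by linarith
  have h1 : 0 ≤ (3-2*r)*((a+2*b+2*c+e)*(1/2 - (a+b+c+e))) :=
    mul_nonneg hu (mul_nonneg (by linarith) (by linarith))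
  have h2 : 0 ≤ (3-2*r)*(a-r*c)^2 := mul_nonneg hu (sq_nonneg _)
  have h3 : 0 ≤ (3-2*r)*(e-r*b)^2 := mul_nonneg hu (sq_nonneg _)
  have h4 : 0 ≤ (3-2*r)*(a*b) := mul_nonneg hu (mul_nonneg ha hb)
  have h5 : 0 ≤ (3-2*r)*(a*e) := mul_nonneg hu (mul_nonneg ha he)
  have h6 : 0 ≤ (23-16*r)*(b*c) := mul_nonneg (by linarith) (mul_nonneg hb hc)
  have h7 : 0 ≤ (3-2*r)*(c*e) := mul_nonneg hu (mul_nonneg hc he)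
  have e1 : r^2*(a*c) = 2*(a*c) := by rw [hr]
  have e2 : r^2*(b*e) = 2*(b*e) := by rw [hr]
  have e3 : r^2*(b^2) = 2*(b^2) := by rw [hr]
  have e4 : r^2*(c^2) = 2*(c^2) := by rw [hr]
  have e5 : r^3*(c^2) = 2*(r*c^2) := by rw [pow_succ, mul_comm (r^2) r, mul_assoc, e4]; ring
  have e6 : r^3*(b^2) = 2*(r*b^2) := by rw [pow_succ, mul_comm (r^2) r, mul_assoc, e3]; ring
  nlinarith [h1, h2, h3, h4, h5, h6, h7, e1, e2, e3, e4, e5, e6]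
open Finset


lemma dist_coe_half (u v : ℝ) (h : |u - v| ≤ 1/2) :
    dist ((u : AddCircle (1:ℝ))) ((v : AddCircle (1:ℝ))) = |u - v| := by
  rw [dist_eq_norm, ← AddCircle.coe_sub, AddCircle.norm_eq]
  rw [show (1:ℝ)⁻¹ * (u - v) = u - v by ring]
  rw [abs_le] at h
  rcases eq_or_lt_of_le h.2 with h' | h'
  · rw [h', show round ((1:ℝ)/2) = 1 by norm_num [round_eq]]
    norm_num
  · have : round (u - v) = 0 := by
      rw [round_eq, Int.floor_eq_zero_iff]
      constructor
      · simpa using by linarith [h.1]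
      · simpa using by linarith
    simp [this]

lemma coe_shift (u : ℝ) : ((u : ℝ) : AddCircle (1:ℝ)) = ((u - 1 : ℝ) : AddCircle (1:ℝ)) := by
  have := AddCircle.coe_add_period (1:ℝ) (u - 1)
  rw [← this]; ring_nf

lemma pos0 (d : Fin 5 → ℝ) : pos d 0 = ((0:ℝ) : AddCircle (1:ℝ)) := by
  rw [pos, show (Finset.Iio (0 : Fin 5)) = ∅ by decide]; norm_num
lemma pos1 (d : Fin 5 → ℝ) : pos d 1 = ((d 0 : ℝ) : AddCircle (1:ℝ)) := by
  rw [pos, show (Finset.Iio (1 : Fin 5)) = {0} by decide]; norm_num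
lemma pos2 (d : Fin 5 → ℝ) : pos d 2 = ((d 0 + d 1 : ℝ) : AddCircle (1:ℝ)) := by
  rw [pos, show (Finset.Iio (2 : Fin 5)) = {0,1} by decide]; norm_num
lemma pos3 (d : Fin 5 → ℝ) : pos d 3 = ((d 0 + d 1 + d 2 : ℝ) : AddCircle (1:ℝ)) := by
  rw [pos, show (Finset.Iio (3 : Fin 5)) = {0,1,2} by decide]
  rw [show ({0,1,2} : Finset (Fin 5)) = insert 0 (insert 1 {2}) from rfl]
  rw [Finset.sum_insert (by decide), Finset.sum_insert (by decide), Finset.sum_singleton]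
  push_cast
  ring
lemma pos4 (d : Fin 5 → ℝ) : pos d 4 = ((d 0 + d 1 + d 2 + d 3 : ℝ) : AddCircle (1:ℝ)) := by
  rw [pos, show (Finset.Iio (4 : Fin 5)) = {0,1,2,3} by decide]
  rw [show ({0,1,2,3} : Finset (Fin 5)) = insert 0 (insert 1 (insert 2 {3})) from rfl]
  rw [Finset.sum_insert (by decide), Finset.sum_insert (by decide),
    Finset.sum_insert (by decide), Finset.sum_singleton]
  push_cast
  ring

lemma core (d : Fin 5 → ℝ) (hd : ∀ i, 0 ≤ d i) (hsum : ∑ i, d i = 1)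
    (h2 : 1/2 ≤ d 2) : PCD d ≤ (7 - 4 * Real.sqrt 2) * OPT d := by
  rw [Fin.sum_univ_five] at hsum
  have n0 := hd 0; have n1 := hd 1; have n2 := hd 2; have n3 := hd 3; have n4 := hd 4
  -- distances
  have h01 : dist (pos d 0) (pos d 1) = d 0 := by
    rw [pos0, pos1, dist_coe_half _ _ (by rw [abs_le]; constructor <;> linarith)]
    rw [abs_of_nonpos (by linarith)]; ring
  have h02 : dist (pos d 0) (pos d 2) = d 0 + d 1 := by
    rw [pos0, pos2, dist_coe_half _ _ (by rw [abs_le]; constructor <;> linarith)]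
    rw [abs_of_nonpos (by linarith)]; ring
  have h03 : dist (pos d 0) (pos d 3) = d 3 + d 4 := by
    rw [pos0, pos3, coe_shift (d 0 + d 1 + d 2),
      dist_coe_half _ _ (by rw [abs_le]; constructor <;> linarith)]
    rw [abs_of_nonneg (by linarith)]; linarith
  have h04 : dist (pos d 0) (pos d 4) = d 4 := by
    rw [pos0, pos4, coe_shift (d 0 + d 1 + d 2 + d 3),
      dist_coe_half _ _ (by rw [abs_le]; constructor <;> linarith)]
    rw [abs_of_nonneg (by linarith)]; linarith
  have h12 : dist (pos d 1) (pos d 2) = d 1 := by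
    rw [pos1, pos2, dist_coe_half _ _ (by rw [abs_le]; constructor <;> linarith)]
    rw [abs_of_nonpos (by linarith)]; ring
  have h13 : dist (pos d 1) (pos d 3) = d 0 + d 3 + d 4 := by
    rw [pos1, pos3, coe_shift (d 0 + d 1 + d 2),
      dist_coe_half _ _ (by rw [abs_le]; constructor <;> linarith)]
    rw [abs_of_nonneg (by linarith)]; linarith
  have h14 : dist (pos d 1) (pos d 4) = d 0 + d 4 := by
    rw [pos1, pos4, coe_shift (d 0 + d 1 + d 2 + d 3),
      dist_coe_half _ _ (by rw [abs_le]; constructor <;> linarith)]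
    rw [abs_of_nonneg (by linarith)]; linarith
  have h23 : dist (pos d 2) (pos d 3) = d 0 + d 1 + d 3 + d 4 := by
    rw [pos2, pos3, coe_shift (d 0 + d 1 + d 2),
      dist_coe_half _ _ (by rw [abs_le]; constructor <;> linarith)]
    rw [abs_of_nonneg (by linarith)]; linarith
  have h24 : dist (pos d 2) (pos d 4) = d 0 + d 1 + d 4 := by
    rw [pos2, pos4, coe_shift (d 0 + d 1 + d 2 + d 3),
      dist_coe_half _ _ (by rw [abs_le]; constructor <;> linarith)]
    rw [abs_of_nonneg (by linarith)]; linarith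
  have h34 : dist (pos d 3) (pos d 4) = d 3 := by
    rw [pos3, pos4, dist_coe_half _ _ (by rw [abs_le]; constructor <;> linarith)]
    rw [abs_of_nonpos (by linarith)]; ring
  have h10 : dist (pos d 1) (pos d 0) = d 0 := by rw [dist_comm]; exact h01
  have h20 : dist (pos d 2) (pos d 0) = d 0 + d 1 := by rw [dist_comm]; exact h02
  have h30 : dist (pos d 3) (pos d 0) = d 3 + d 4 := by rw [dist_comm]; exact h03
  have h40 : dist (pos d 4) (pos d 0) = d 4 := by rw [dist_comm]; exact h04
  have h21 : dist (pos d 2) (pos d 1) = d 1 := by rw [dist_comm]; exact h12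
  have h31 : dist (pos d 3) (pos d 1) = d 0 + d 3 + d 4 := by rw [dist_comm]; exact h13
  have h41 : dist (pos d 4) (pos d 1) = d 0 + d 4 := by rw [dist_comm]; exact h14
  have h32 : dist (pos d 3) (pos d 2) = d 0 + d 1 + d 3 + d 4 := by rw [dist_comm]; exact h23
  have h42 : dist (pos d 4) (pos d 2) = d 0 + d 1 + d 4 := by rw [dist_comm]; exact h24
  have h43 : dist (pos d 4) (pos d 3) = d 3 := by rw [dist_comm]; exact h34
  -- costs
  have hC0 : C d 0 = 2*d 0 + d 1 + d 3 + 2*d 4 := by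
    rw [C, SC, Fin.sum_univ_five, dist_self, h10, h20, h30, h40]; ring
  have hC1 : C d 1 = 3*d 0 + d 1 + d 3 + 2*d 4 := by
    rw [C, SC, Fin.sum_univ_five, dist_self, h01, h21, h31, h41]; ring
  have hC2 : C d 2 = 3*d 0 + 4*d 1 + d 3 + 2*d 4 := by
    rw [C, SC, Fin.sum_univ_five, dist_self, h02, h12, h32, h42]; ring
  have hC3 : C d 3 = 2*d 0 + d 1 + 4*d 3 + 3*d 4 := by
    rw [C, SC, Fin.sum_univ_five, dist_self, h03, h13, h23, h43]; ring
  have hC4 : C d 4 = 2*d 0 + d 1 + d 3 + 3*d 4 := by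
    rw [C, SC, Fin.sum_univ_five, dist_self, h04, h14, h24, h34]; ring
  -- OPT
  have hSCnn : ∀ a : AddCircle (1:ℝ), 0 ≤ SC d a := fun a =>
    Finset.sum_nonneg fun i _ => dist_nonneg
  have hlow : ∀ x : AddCircle (1:ℝ), 2*d 0 + d 1 + d 3 + 2*d 4 ≤ SC d x := by
    intro x
    have t1 := dist_triangle (pos d 2) x (pos d 3)
    have t2 := dist_triangle (pos d 1) x (pos d 4)
    rw [dist_comm x (pos d 3)] at t1
    rw [dist_comm x (pos d 4)] at t2
    rw [h23] at t1; rw [h14] at t2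
    have t0 : (0:ℝ) ≤ dist (pos d 0) x := dist_nonneg
    rw [SC, Fin.sum_univ_five]
    linarith
  have hOPT : OPT d = 2*d 0 + d 1 + d 3 + 2*d 4 := by
    apply le_antisymm
    · have hb : BddBelow (Set.range fun a : AddCircle (1:ℝ) => SC d a) := by
        refine ⟨0, ?_⟩; rintro y ⟨a, rfl⟩; exact hSCnn a
      calc OPT d ≤ SC d (pos d 0) := ciInf_le hb (pos d 0)
        _ = 2*d 0 + d 1 + d 3 + 2*d 4 := hC0
    · exact le_ciInf hlow
  -- PCD
  have hPCD : PCD d = d 2 * C d 0 + d 3 * C d 1 + d 4 * C d 2 + d 0 * C d 3 + d 1 * C d 4 := by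
    rw [PCD, Fin.sum_univ_five]
    rw [show P d 0 = d 2 from rfl, show P d 1 = d 3 by rw [P]; congr 1,
      show P d 2 = d 4 by rw [P]; congr 1,
      show P d 3 = d 0 by rw [P]; congr 1,
      show P d 4 = d 1 by rw [P]; congr 1]
  -- conclude
  have hr : (Real.sqrt 2)^2 = 2 := Real.sq_sqrt (by norm_num)
  have hr0 : 1 ≤ Real.sqrt 2 := by
    have := Real.sqrt_le_sqrt (show (1:ℝ) ≤ 2 by norm_num)
    simpa using this
  have hr1 : Real.sqrt 2 ≤ 23/16 := by
    have h := Real.sqrt_le_sqrt (show (2:ℝ) ≤ (23/16)^2 by norm_num)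
    rwa [Real.sqrt_sq (by norm_num)] at h
  have key := scalar_key (d 3) (d 4) (d 0) (d 1) (Real.sqrt 2) n3 n4 n0 n1
    (by linarith) hr hr0 hr1
  rw [hPCD, hOPT, hC0, hC1, hC2, hC3, hC4]
  have hd2 : d 2 = 1 - (d 0 + d 1 + d 3 + d 4) := by linarith
  rw [hd2]
  clear hlow hSCnn hOPT hPCD hd2 h2 hsum hd hr hr0 hr1
  clear h01 h02 h03 h04 h12 h13 h14 h23 h24 h34 h10 h20 h30 h40 h21 h31 h41 h32 h42 h43
  clear hC0 hC1 hC2 hC3 hC4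
  nlinarith [key]
noncomputable def rot (d : Fin 5 → ℝ) : Fin 5 → ℝ := fun j => d (j + 1)

lemma pos_rot (d : Fin 5 → ℝ) (hsum : ∑ i, d i = 1) (j : Fin 5) :
    pos (rot d) j = pos d (j + 1) - ((d 0 : ℝ) : AddCircle (1:ℝ)) := by
  rw [Fin.sum_univ_five] at hsum
  have r0 : rot d 0 = d 1 := congrArg d (by decide)
  have r1 : rot d 1 = d 2 := congrArg d (by decide)
  have r2 : rot d 2 = d 3 := congrArg d (by decide)
  have r3 : rot d 3 = d 4 := congrArg d (by decide)
  fin_cases j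
  · show pos (rot d) 0 = pos d (0 + 1) - ((d 0 : ℝ) : AddCircle (1:ℝ))
    rw [show ((0:Fin 5) + 1) = 1 by decide, pos0, pos1, ← AddCircle.coe_sub]
    congr 1; ring
  · show pos (rot d) 1 = pos d (1 + 1) - ((d 0 : ℝ) : AddCircle (1:ℝ))
    rw [show ((1:Fin 5) + 1) = 2 by decide, pos1, pos2, ← AddCircle.coe_sub, r0]
    congr 1; ring
  · show pos (rot d) 2 = pos d (2 + 1) - ((d 0 : ℝ) : AddCircle (1:ℝ))
    rw [show ((2:Fin 5) + 1) = 3 by decide, pos2, pos3, ← AddCircle.coe_sub, r0, r1]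
    congr 1; ring
  · show pos (rot d) 3 = pos d (3 + 1) - ((d 0 : ℝ) : AddCircle (1:ℝ))
    rw [show ((3:Fin 5) + 1) = 4 by decide, pos3, pos4, ← AddCircle.coe_sub, r0, r1, r2]
    congr 1; ring
  · show pos (rot d) 4 = pos d (4 + 1) - ((d 0 : ℝ) : AddCircle (1:ℝ))
    rw [show ((4:Fin 5) + 1) = 0 by decide, pos4, pos0, ← AddCircle.coe_sub, r0, r1, r2, r3,
      coe_shift (d 1 + d 2 + d 3 + d 4)]
    congr 1; linarith

lemma SC_rot (d : Fin 5 → ℝ) (hsum : ∑ i, d i = 1) (a : AddCircle (1:ℝ)) :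
    SC (rot d) a = SC d (a + ((d 0 : ℝ) : AddCircle (1:ℝ))) := by
  have key : ∀ j : Fin 5, dist (pos (rot d) j) a
      = dist (pos d (j + 1)) (a + ((d 0 : ℝ) : AddCircle (1:ℝ))) := by
    intro j
    rw [pos_rot d hsum j]
    calc dist (pos d (j+1) - ((d 0:ℝ) : AddCircle (1:ℝ))) a
        = dist (pos d (j+1) - ((d 0:ℝ) : AddCircle (1:ℝ)))
            ((a + ((d 0:ℝ) : AddCircle (1:ℝ))) - ((d 0:ℝ) : AddCircle (1:ℝ))) := by
          rw [add_sub_cancel_right]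
      _ = dist (pos d (j+1)) (a + ((d 0:ℝ) : AddCircle (1:ℝ))) := dist_sub_right _ _ _
  rw [SC, SC, Fin.sum_univ_five, Fin.sum_univ_five, key 0, key 1, key 2, key 3, key 4,
    show ((0:Fin 5) + 1) = 1 by decide, show ((1:Fin 5) + 1) = 2 by decide,
    show ((2:Fin 5) + 1) = 3 by decide, show ((3:Fin 5) + 1) = 4 by decide,
    show ((4:Fin 5) + 1) = 0 by decide]
  ring

lemma C_rot (d : Fin 5 → ℝ) (hsum : ∑ i, d i = 1) (j : Fin 5) :
    C (rot d) j = C d (j + 1) := by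
  rw [C, C, SC_rot d hsum, pos_rot d hsum j, sub_add_cancel]

lemma OPT_rot (d : Fin 5 → ℝ) (hsum : ∑ i, d i = 1) : OPT (rot d) = OPT d := by
  rw [OPT, OPT, iInf, iInf]
  congr 1
  ext y
  constructor
  · rintro ⟨a, rfl⟩
    exact ⟨a + ((d 0:ℝ) : AddCircle (1:ℝ)), (SC_rot d hsum a).symm⟩
  · rintro ⟨a, rfl⟩
    refine ⟨a - ((d 0:ℝ) : AddCircle (1:ℝ)), ?_⟩
    show SC (rot d) (a - ((d 0:ℝ) : AddCircle (1:ℝ))) = SC d a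
    rw [SC_rot d hsum, sub_add_cancel]

lemma PCD_rot (d : Fin 5 → ℝ) (hsum : ∑ i, d i = 1) : PCD (rot d) = PCD d := by
  have hP : ∀ j : Fin 5, P (rot d) j = P d (j + 1) := by
    intro j
    rw [P, P, rot]
    congr 1
    open Fin.CommRing in ring
  rw [PCD, PCD, Fin.sum_univ_five, Fin.sum_univ_five, hP 0, hP 1, hP 2, hP 3, hP 4,
    C_rot d hsum 0, C_rot d hsum 1, C_rot d hsum 2, C_rot d hsum 3, C_rot d hsum 4,
    show ((0:Fin 5) + 1) = 1 by decide, show ((1:Fin 5) + 1) = 2 by decide,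
    show ((2:Fin 5) + 1) = 3 by decide, show ((3:Fin 5) + 1) = 4 by decide,
    show ((4:Fin 5) + 1) = 0 by decide]
  ring

lemma sum_rot (d : Fin 5 → ℝ) : ∑ i, rot d i = ∑ i, d i := by
  rw [Fin.sum_univ_five, Fin.sum_univ_five, rot, rot, rot, rot, rot,
    show ((0:Fin 5) + 1) = 1 by decide, show ((1:Fin 5) + 1) = 2 by decide,
    show ((2:Fin 5) + 1) = 3 by decide, show ((3:Fin 5) + 1) = 4 by decide,
    show ((4:Fin 5) + 1) = 0 by decide]
  ring

open Fin.NatCast Fin.CommRing in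
lemma rot_iterate (d : Fin 5 → ℝ) (n : ℕ) :
    rot^[n] d = fun j => d (j + (n : Fin 5)) := by
  induction n with
  | zero => funext j; simp
  | succ n ih =>
    rw [Function.iterate_succ_apply', ih]
    funext j
    rw [rot]
    congr 1
    push_cast
    ring

lemma iter_inv (d : Fin 5 → ℝ) (hd : ∀ i, 0 ≤ d i) (hsum : ∑ i, d i = 1) (n : ℕ) :
    (∀ i, 0 ≤ (rot^[n] d) i) ∧ (∑ i, rot^[n] d i = 1) ∧
      PCD (rot^[n] d) = PCD d ∧ OPT (rot^[n] d) = OPT d := by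
  induction n with
  | zero => exact ⟨hd, hsum, rfl, rfl⟩
  | succ n ih =>
    obtain ⟨ih1, ih2, ih3, ih4⟩ := ih
    rw [Function.iterate_succ_apply']
    exact ⟨fun i => ih1 (i + 1), (sum_rot _).trans ih2,
      (PCD_rot _ ih2).trans ih3, (OPT_rot _ ih2).trans ih4⟩


theorem large_arc_instances (d : Fin 5 → ℝ) (hd : ∀ i, 0 ≤ d i)
    (hsum : ∑ i, d i = 1) (i : Fin 5) (hi : 1 / 2 ≤ P d i) :
    PCD d ≤ (7 - 4 * Real.sqrt 2) * OPT d := by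
  obtain ⟨hd', hsum', hPCD', hOPT'⟩ := iter_inv d hd hsum i.1
  have h2 : 1/2 ≤ (rot^[i.1] d) 2 := by
    rw [rot_iterate]
    rw [P] at hi
    simpa [Fin.cast_val_eq_self, add_comm] using hi
  have := core (rot^[i.1] d) hd' hsum' h2
  rw [hPCD', hOPT'] at this
  exact this
end

section
/- Bounding the social cost: for every instance of 5 agents on the unit circle, the expected social cost of the PCD mechanism satisfies PCD = ∑ i, P i · C i ≤ 6/5. -/
open Finset

private lemma dist_coe_le (a b : ℝ) (k : ℤ) :
    dist ((a : ℝ) : AddCircle (1 : ℝ)) (b : AddCircle (1 : ℝ)) ≤ |a - b - k| := by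
  rw [dist_eq_norm, ← AddCircle.coe_sub, AddCircle.norm_eq]
  simpa using round_le (a - b) k

theorem pcd_social_cost_bound (d : Fin 5 → ℝ) (hd : ∀ i, 0 ≤ d i)
    (hsum : ∑ i, d i = 1) :
    PCD d ≤ 6 / 5 := by
  have h5 : d 0 + d 1 + d 2 + d 3 + d 4 = 1 := by
    rw [← hsum, Fin.sum_univ_five]
  have e0 : pos d 0 = ((0 : ℝ) : AddCircle (1 : ℝ)) := by
    rw [pos, show (Finset.Iio (0 : Fin 5)) = ∅ by decide]; simp
  have e1 : pos d 1 = ((d 0 : ℝ) : AddCircle (1 : ℝ)) := by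
    rw [pos, show (Finset.Iio (1 : Fin 5)) = {0} by decide]; simp
  have e2 : pos d 2 = ((d 0 + d 1 : ℝ) : AddCircle (1 : ℝ)) := by
    rw [pos, show (Finset.Iio (2 : Fin 5)) = {0, 1} by decide]
    rw [Finset.sum_pair (by decide)]
  have e3 : pos d 3 = ((d 0 + d 1 + d 2 : ℝ) : AddCircle (1 : ℝ)) := by
    rw [pos, show (Finset.Iio (3 : Fin 5)) = {0, 1, 2} by decide]
    congr 1
    rw [Finset.sum_insert (by decide), Finset.sum_pair (by decide)]; ring
  have e4 : pos d 4 = ((d 0 + d 1 + d 2 + d 3 : ℝ) : AddCircle (1 : ℝ)) := by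
    rw [pos, show (Finset.Iio (4 : Fin 5)) = {0, 1, 2, 3} by decide]
    congr 1
    rw [Finset.sum_insert (by decide), Finset.sum_insert (by decide),
      Finset.sum_pair (by decide)]; ring
  -- pairwise distance bounds
  have bnd : ∀ (a b c : ℝ) (k : ℤ), 0 ≤ c → a - b - k = c →
      dist ((a : ℝ) : AddCircle (1 : ℝ)) (b : AddCircle (1 : ℝ)) ≤ c := by
    intro a b c k hc hab
    have := dist_coe_le a b k
    rwa [hab, abs_of_nonneg hc] at this
  have h01 : dist (pos d 0) (pos d 1) ≤ d 0 := by
    rw [e0, e1, dist_comm]; exact bnd _ _ _ 0 (hd 0) (by push_cast; ring)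
  have h12 : dist (pos d 1) (pos d 2) ≤ d 1 := by
    rw [e1, e2, dist_comm]; exact bnd _ _ _ 0 (hd 1) (by push_cast; ring)
  have h23 : dist (pos d 2) (pos d 3) ≤ d 2 := by
    rw [e2, e3, dist_comm]; exact bnd _ _ _ 0 (hd 2) (by push_cast; ring)
  have h34 : dist (pos d 3) (pos d 4) ≤ d 3 := by
    rw [e3, e4, dist_comm]; exact bnd _ _ _ 0 (hd 3) (by push_cast; ring)
  have h04 : dist (pos d 0) (pos d 4) ≤ d 4 := by
    rw [e0, e4]; exact bnd _ _ _ (-1) (hd 4) (by push_cast; linarith)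
  have h02 : dist (pos d 0) (pos d 2) ≤ d 0 + d 1 := by
    rw [e0, e2, dist_comm]
    exact bnd _ _ _ 0 (by linarith [hd 0, hd 1]) (by push_cast; ring)
  have h13 : dist (pos d 1) (pos d 3) ≤ d 1 + d 2 := by
    rw [e1, e3, dist_comm]
    exact bnd _ _ _ 0 (by linarith [hd 1, hd 2]) (by push_cast; ring)
  have h24 : dist (pos d 2) (pos d 4) ≤ d 2 + d 3 := by
    rw [e2, e4, dist_comm]
    exact bnd _ _ _ 0 (by linarith [hd 2, hd 3]) (by push_cast; ring)
  have h03 : dist (pos d 0) (pos d 3) ≤ d 3 + d 4 := by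
    rw [e0, e3]
    exact bnd _ _ _ (-1) (by linarith [hd 3, hd 4]) (by push_cast; linarith)
  have h14 : dist (pos d 1) (pos d 4) ≤ d 4 + d 0 := by
    rw [e1, e4]
    exact bnd _ _ _ (-1) (by linarith [hd 4, hd 0]) (by push_cast; linarith)
  -- bounds on C
  have hC : ∀ i, C d i = ∑ j : Fin 5, dist (pos d j) (pos d i) := fun i => rfl
  have hC0 : C d 0 ≤ d 0 + (d 0 + d 1) + (d 3 + d 4) + d 4 := by
    rw [hC 0, Fin.sum_univ_five, dist_self]
    rw [dist_comm (pos d 1), dist_comm (pos d 2), dist_comm (pos d 3), dist_comm (pos d 4)]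
    linarith [h01, h02, h03, h04]
  have hC1 : C d 1 ≤ d 0 + d 1 + (d 1 + d 2) + (d 4 + d 0) := by
    rw [hC 1, Fin.sum_univ_five, dist_self]
    rw [dist_comm (pos d 2), dist_comm (pos d 3), dist_comm (pos d 4)]
    linarith [h01, h12, h13, h14]
  have hC2 : C d 2 ≤ (d 0 + d 1) + d 1 + d 2 + (d 2 + d 3) := by
    rw [hC 2, Fin.sum_univ_five, dist_self]
    rw [dist_comm (pos d 3), dist_comm (pos d 4)]
    linarith [h02, h12, h23, h24]
  have hC3 : C d 3 ≤ (d 3 + d 4) + (d 1 + d 2) + d 2 + d 3 := by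
    rw [hC 3, Fin.sum_univ_five, dist_self]
    rw [dist_comm (pos d 4)]
    linarith [h03, h13, h23, h34]
  have hC4 : C d 4 ≤ d 4 + (d 4 + d 0) + (d 2 + d 3) + d 3 := by
    rw [hC 4, Fin.sum_univ_five, dist_self]
    linarith [h04, h14, h24, h34]
  have hPCD : PCD d = d 2 * C d 0 + d 3 * C d 1 + d 4 * C d 2 + d 0 * C d 3 + d 1 * C d 4 := by
    rw [PCD, Fin.sum_univ_five, P, P, P, P, P,
      show ((0 : Fin 5) + 2) = 2 by decide, show ((1 : Fin 5) + 2) = 3 by decide,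
      show ((2 : Fin 5) + 2) = 4 by decide, show ((3 : Fin 5) + 2) = 0 by decide,
      show ((4 : Fin 5) + 2) = 1 by decide]
  rw [hPCD]
  have m0 := mul_le_mul_of_nonneg_left hC0 (hd 2)
  have m1 := mul_le_mul_of_nonneg_left hC1 (hd 3)
  have m2 := mul_le_mul_of_nonneg_left hC2 (hd 4)
  have m3 := mul_le_mul_of_nonneg_left hC3 (hd 0)
  have m4 := mul_le_mul_of_nonneg_left hC4 (hd 1)
  have quad : d 2 * (d 0 + (d 0 + d 1) + (d 3 + d 4) + d 4)
      + d 3 * (d 0 + d 1 + (d 1 + d 2) + (d 4 + d 0))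
      + d 4 * ((d 0 + d 1) + d 1 + d 2 + (d 2 + d 3))
      + d 0 * ((d 3 + d 4) + (d 1 + d 2) + d 2 + d 3)
      + d 1 * (d 4 + (d 4 + d 0) + (d 2 + d 3) + d 3)
      ≤ 6 / 5 * (d 0 + d 1 + d 2 + d 3 + d 4) ^ 2 := by
    have hid : 6 / 5 * (d 0 + d 1 + d 2 + d 3 + d 4) ^ 2
        - (d 2 * (d 0 + (d 0 + d 1) + (d 3 + d 4) + d 4)
          + d 3 * (d 0 + d 1 + (d 1 + d 2) + (d 4 + d 0))
          + d 4 * ((d 0 + d 1) + d 1 + d 2 + (d 2 + d 3))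
          + d 0 * ((d 3 + d 4) + (d 1 + d 2) + d 2 + d 3)
          + d 1 * (d 4 + (d 4 + d 0) + (d 2 + d 3) + d 3))
        = 6 / 5 * (d 0 + d 1 / 6 - 2 * d 2 / 3 - 2 * d 3 / 3 + d 4 / 6) ^ 2
          + 7 / 6 * (d 1 + 2 * d 2 / 7 - 4 * d 3 / 7 - 5 * d 4 / 7) ^ 2
          + 4 / 7 * (d 2 - d 3 / 4 - 3 * d 4 / 4) ^ 2
          + 1 / 4 * (d 3 - d 4) ^ 2 := by ring
    linarith [sq_nonneg (d 0 + d 1 / 6 - 2 * d 2 / 3 - 2 * d 3 / 3 + d 4 / 6),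
      sq_nonneg (d 1 + 2 * d 2 / 7 - 4 * d 3 / 7 - 5 * d 4 / 7),
      sq_nonneg (d 2 - d 3 / 4 - 3 * d 4 / 4), sq_nonneg (d 3 - d 4), hid]
  rw [h5] at quad
  norm_num at quad
  linarith [m0, m1, m2, m3, m4, quad]
end

section
/- Quadratic inequality on the simplex: for every p : Fin 5 → ℝ with p i ≥ 0 for all i and ∑ i, p i = 1, one has 1 − ∑ i, (p i)² + 2 · ∑ i, p i · p (i + 2) ≤ 6/5, with equality when p i = 1/5 for all i (indices taken mod 5). -/
theorem quadratic_simplex_bound (p : Fin 5 → ℝ) (hp : ∀ i, 0 ≤ p i)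
    (hsum : ∑ i, p i = 1) :
    1 - ∑ i, (p i) ^ 2 + 2 * ∑ i, p i * p (i + 2) ≤ 6 / 5 ∧
    ((∀ i, p i = 1 / 5) →
      1 - ∑ i, (p i) ^ 2 + 2 * ∑ i, p i * p (i + 2) = 6 / 5) := by
  have h0 := hp 0; have h1 := hp 1; have h2 := hp 2; have h3 := hp 3; have h4 := hp 4
  simp only [Fin.sum_univ_five] at hsum ⊢
  norm_num
  rw [show (1+2:Fin 5) = 3 from rfl, show (2+2:Fin 5) = 4 from rfl, show (3+2:Fin 5) = 0 from rfl, show (4+2:Fin 5) = 1 from rfl]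
  constructor
  · have hsq : (p 0 + p 1 + p 2 + p 3 + p 4) ^ 2 = 1 := by rw [hsum]; norm_num
    linarith [sq_nonneg (6*p 0 + p 1 - 4*p 2 - 4*p 3 + p 4),
      sq_nonneg (7*p 1 + 2*p 2 - 4*p 3 - 5*p 4),
      sq_nonneg (4*p 2 - p 3 - 3*p 4), sq_nonneg (p 3 - p 4), hsq]
  · intro h
    rw [h 0, h 1, h 2, h 3, h 4]
    norm_num
end

section
/- If the optimal social cost of a 5-agent instance is at least 0.9, then the expected social cost of PCD is at most (7 − 4√2) times the optimal social cost: OPT ≥ 9/10 implies PCD ≤ (7 − 4√2) · OPT. -/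
open Finset

lemma dist_circle_le (a b : ℝ) (n : ℤ) :
    dist ((a : AddCircle (1 : ℝ))) ((b : AddCircle (1 : ℝ))) ≤ |a - b - n| := by
  rw [dist_eq_norm, ← QuotientAddGroup.mk_sub, AddCircle.norm_eq]
  simpa using round_le (a - b) n

set_option maxHeartbeats 1000000 in
theorem pcd_of_large_opt (d : Fin 5 → ℝ) (hd : ∀ i, 0 ≤ d i)
    (hsum : ∑ i, d i = 1) (hOPT : 9 / 10 ≤ OPT d) :
    PCD d ≤ (7 - 4 * Real.sqrt 2) * OPT d := by
  have h0 := hd 0; have h1 := hd 1; have h2 := hd 2; have h3 := hd 3; have h4 := hd 4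
  have ht : d 0 + d 1 + d 2 + d 3 + d 4 = 1 := by
    rw [← hsum, Fin.sum_univ_five]
  have p0 : pos d 0 = ((0 : ℝ) : AddCircle (1:ℝ)) := by
    rw [pos, show Finset.Iio (0 : Fin 5) = ∅ from by decide]; norm_num
  have p1 : pos d 1 = ((d 0 : ℝ) : AddCircle (1:ℝ)) := by
    rw [pos, show Finset.Iio (1 : Fin 5) = {0} from by decide]; norm_num
  have p2 : pos d 2 = ((d 0 + d 1 : ℝ) : AddCircle (1:ℝ)) := by
    rw [pos]; congr 1
    rw [show Finset.Iio (2 : Fin 5) = {0, 1} from by decide, Finset.sum_pair (by decide)]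
  have p3 : pos d 3 = ((d 0 + d 1 + d 2 : ℝ) : AddCircle (1:ℝ)) := by
    rw [pos]; congr 1
    rw [show Finset.Iio (3 : Fin 5) = {0, 1, 2} from by decide,
      Finset.sum_insert (by decide), Finset.sum_pair (by decide)]
    ring
  have p4 : pos d 4 = ((d 0 + d 1 + d 2 + d 3 : ℝ) : AddCircle (1:ℝ)) := by
    rw [pos]; congr 1
    rw [show Finset.Iio (4 : Fin 5) = {0, 1, 2, 3} from by decide,
      Finset.sum_insert (by decide), Finset.sum_insert (by decide),
      Finset.sum_pair (by decide)]
    ring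
  -- distance bounds
  have B : ∀ a b : ℝ, ∀ n : ℤ, ∀ u : ℝ, -u ≤ a - b - n → a - b - n ≤ u →
      dist ((a : AddCircle (1:ℝ))) ((b : AddCircle (1:ℝ))) ≤ u := by
    intro a b n u hl hr
    exact (dist_circle_le a b n).trans (abs_le.mpr ⟨hl, hr⟩)
  have hC0 : C d 0 ≤ 2 * d 4 + 2 * d 0 + d 1 + d 3 := by
    have b1 : dist ((d 0 : ℝ) : AddCircle (1:ℝ)) ((0 : ℝ) : AddCircle (1:ℝ)) ≤ d 0 :=
      B _ _ 0 _ (by push_cast; linarith) (by push_cast; linarith)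
    have b2 : dist ((d 0 + d 1 : ℝ) : AddCircle (1:ℝ)) ((0 : ℝ) : AddCircle (1:ℝ)) ≤ d 0 + d 1 :=
      B _ _ 0 _ (by push_cast; linarith) (by push_cast; linarith)
    have b3 : dist ((d 0 + d 1 + d 2 : ℝ) : AddCircle (1:ℝ)) ((0 : ℝ) : AddCircle (1:ℝ)) ≤ d 3 + d 4 :=
      B _ _ 1 _ (by push_cast; linarith) (by push_cast; linarith)
    have b4 : dist ((d 0 + d 1 + d 2 + d 3 : ℝ) : AddCircle (1:ℝ)) ((0 : ℝ) : AddCircle (1:ℝ)) ≤ d 4 :=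
      B _ _ 1 _ (by push_cast; linarith) (by push_cast; linarith)
    simp only [C, SC, Fin.sum_univ_five, p0, p1, p2, p3, p4, dist_self]
    linarith
  have hC1 : C d 1 ≤ 2 * d 0 + 2 * d 1 + d 2 + d 4 := by
    have b1 : dist ((0 : ℝ) : AddCircle (1:ℝ)) ((d 0 : ℝ) : AddCircle (1:ℝ)) ≤ d 0 :=
      B _ _ 0 _ (by push_cast; linarith) (by push_cast; linarith)
    have b2 : dist ((d 0 + d 1 : ℝ) : AddCircle (1:ℝ)) ((d 0 : ℝ) : AddCircle (1:ℝ)) ≤ d 1 :=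
      B _ _ 0 _ (by push_cast; linarith) (by push_cast; linarith)
    have b3 : dist ((d 0 + d 1 + d 2 : ℝ) : AddCircle (1:ℝ)) ((d 0 : ℝ) : AddCircle (1:ℝ)) ≤ d 1 + d 2 :=
      B _ _ 0 _ (by push_cast; linarith) (by push_cast; linarith)
    have b4 : dist ((d 0 + d 1 + d 2 + d 3 : ℝ) : AddCircle (1:ℝ)) ((d 0 : ℝ) : AddCircle (1:ℝ)) ≤ d 4 + d 0 :=
      B _ _ 1 _ (by push_cast; linarith) (by push_cast; linarith)
    simp only [C, SC, Fin.sum_univ_five, p0, p1, p2, p3, p4, dist_self]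
    linarith
  have hC2 : C d 2 ≤ 2 * d 1 + 2 * d 2 + d 3 + d 0 := by
    have b1 : dist ((0 : ℝ) : AddCircle (1:ℝ)) ((d 0 + d 1 : ℝ) : AddCircle (1:ℝ)) ≤ d 0 + d 1 :=
      B _ _ 0 _ (by push_cast; linarith) (by push_cast; linarith)
    have b2 : dist ((d 0 : ℝ) : AddCircle (1:ℝ)) ((d 0 + d 1 : ℝ) : AddCircle (1:ℝ)) ≤ d 1 :=
      B _ _ 0 _ (by push_cast; linarith) (by push_cast; linarith)
    have b3 : dist ((d 0 + d 1 + d 2 : ℝ) : AddCircle (1:ℝ)) ((d 0 + d 1 : ℝ) : AddCircle (1:ℝ)) ≤ d 2 :=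
      B _ _ 0 _ (by push_cast; linarith) (by push_cast; linarith)
    have b4 : dist ((d 0 + d 1 + d 2 + d 3 : ℝ) : AddCircle (1:ℝ)) ((d 0 + d 1 : ℝ) : AddCircle (1:ℝ)) ≤ d 2 + d 3 :=
      B _ _ 0 _ (by push_cast; linarith) (by push_cast; linarith)
    simp only [C, SC, Fin.sum_univ_five, p0, p1, p2, p3, p4, dist_self]
    linarith
  have hC3 : C d 3 ≤ 2 * d 2 + 2 * d 3 + d 4 + d 1 := by
    have b1 : dist ((0 : ℝ) : AddCircle (1:ℝ)) ((d 0 + d 1 + d 2 : ℝ) : AddCircle (1:ℝ)) ≤ d 3 + d 4 :=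
      B _ _ (-1) _ (by push_cast; linarith) (by push_cast; linarith)
    have b2 : dist ((d 0 : ℝ) : AddCircle (1:ℝ)) ((d 0 + d 1 + d 2 : ℝ) : AddCircle (1:ℝ)) ≤ d 1 + d 2 :=
      B _ _ 0 _ (by push_cast; linarith) (by push_cast; linarith)
    have b3 : dist ((d 0 + d 1 : ℝ) : AddCircle (1:ℝ)) ((d 0 + d 1 + d 2 : ℝ) : AddCircle (1:ℝ)) ≤ d 2 :=
      B _ _ 0 _ (by push_cast; linarith) (by push_cast; linarith)
    have b4 : dist ((d 0 + d 1 + d 2 + d 3 : ℝ) : AddCircle (1:ℝ)) ((d 0 + d 1 + d 2 : ℝ) : AddCircle (1:ℝ)) ≤ d 3 :=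
      B _ _ 0 _ (by push_cast; linarith) (by push_cast; linarith)
    simp only [C, SC, Fin.sum_univ_five, p0, p1, p2, p3, p4, dist_self]
    linarith
  have hC4 : C d 4 ≤ 2 * d 3 + 2 * d 4 + d 0 + d 2 := by
    have b1 : dist ((0 : ℝ) : AddCircle (1:ℝ)) ((d 0 + d 1 + d 2 + d 3 : ℝ) : AddCircle (1:ℝ)) ≤ d 4 :=
      B _ _ (-1) _ (by push_cast; linarith) (by push_cast; linarith)
    have b2 : dist ((d 0 : ℝ) : AddCircle (1:ℝ)) ((d 0 + d 1 + d 2 + d 3 : ℝ) : AddCircle (1:ℝ)) ≤ d 4 + d 0 :=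
      B _ _ (-1) _ (by push_cast; linarith) (by push_cast; linarith)
    have b3 : dist ((d 0 + d 1 : ℝ) : AddCircle (1:ℝ)) ((d 0 + d 1 + d 2 + d 3 : ℝ) : AddCircle (1:ℝ)) ≤ d 2 + d 3 :=
      B _ _ 0 _ (by push_cast; linarith) (by push_cast; linarith)
    have b4 : dist ((d 0 + d 1 + d 2 : ℝ) : AddCircle (1:ℝ)) ((d 0 + d 1 + d 2 + d 3 : ℝ) : AddCircle (1:ℝ)) ≤ d 3 :=
      B _ _ 0 _ (by push_cast; linarith) (by push_cast; linarith)
    simp only [C, SC, Fin.sum_univ_five, p0, p1, p2, p3, p4, dist_self]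
    linarith
  have hP : PCD d = d 2 * C d 0 + d 3 * C d 1 + d 4 * C d 2 + d 0 * C d 3 + d 1 * C d 4 := by
    rw [PCD, Fin.sum_univ_five]
    rfl
  have hq : (d 0 + d 1 + d 2 + d 3 + d 4) ^ 2 = 1 := by rw [ht]; norm_num
  have key : PCD d ≤ 6 / 5 := by
    rw [hP]
    have m0 := mul_le_mul_of_nonneg_left hC0 h2
    have m1 := mul_le_mul_of_nonneg_left hC1 h3
    have m2 := mul_le_mul_of_nonneg_left hC2 h4
    have m3 := mul_le_mul_of_nonneg_left hC3 h0
    have m4 := mul_le_mul_of_nonneg_left hC4 h1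
    have step : d 2 * C d 0 + d 3 * C d 1 + d 4 * C d 2 + d 0 * C d 3 + d 1 * C d 4 ≤
        d 2 * (2 * d 4 + 2 * d 0 + d 1 + d 3) + d 3 * (2 * d 0 + 2 * d 1 + d 2 + d 4) +
        d 4 * (2 * d 1 + 2 * d 2 + d 3 + d 0) + d 0 * (2 * d 2 + 2 * d 3 + d 4 + d 1) +
        d 1 * (2 * d 3 + 2 * d 4 + d 0 + d 2) := by linarith
    refine step.trans ?_
    nlinarith [hq, sq_nonneg (d 0 + d 1 - 2 * d 3), sq_nonneg (d 1 + d 2 - 2 * d 4),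
      sq_nonneg (d 2 + d 3 - 2 * d 0), sq_nonneg (d 3 + d 4 - 2 * d 1),
      sq_nonneg (d 4 + d 0 - 2 * d 2)]
  have hsq : Real.sqrt 2 ≤ 17 / 12 := by
    nlinarith [Real.sq_sqrt (show (0:ℝ) ≤ 2 by norm_num), Real.sqrt_nonneg 2]
  nlinarith [key, hsq, hOPT]
end

section
/- Suppose in a 5-agent instance (1-based labels x 1,…,x 5 with gaps d 1,…,d 5) agent 3's location is optimal (C 3 = OPT) and agent 3 is median optimal, in the sense that dist(x 3, x 4) = d 3, dist(x 3, x 5) = d 3 + d 4, dist(x 3, x 2) = d 2, and dist(x 3, x 1) = d 1 + d 2. If moreover P 1 + P 5 ≥ 1/2 (i.e., d 2 + d 3 ≥ 1/2), then PCD ≤ (7 − 4√2) · OPT. -/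
open Finset

lemma dist_coe_le_abs (u v : ℝ) (k : ℤ) :
    dist ((u : AddCircle (1:ℝ))) ((v : AddCircle (1:ℝ))) ≤ |u - v - k| := by
  rw [dist_eq_norm]
  have h : ((u:AddCircle (1:ℝ)) - v) = ((u - v : ℝ) : AddCircle (1:ℝ)) := by norm_cast
  rw [h, AddCircle.norm_eq]
  simpa using round_le (u - v) k

set_option maxHeartbeats 1000000 in
theorem median_optimal_large_halfgap (d : Fin 5 → ℝ) (hd : ∀ i, 0 ≤ d i)
    (hsum : ∑ i, d i = 1)
    (hopt : C d 2 = OPT d)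
    (h34 : dist (pos d 2) (pos d 3) = d 2)
    (h35 : dist (pos d 2) (pos d 4) = d 2 + d 3)
    (h32 : dist (pos d 2) (pos d 1) = d 1)
    (h31 : dist (pos d 2) (pos d 0) = d 0 + d 1)
    (hhalf : 1 / 2 ≤ d 1 + d 2) :
    PCD d ≤ (7 - 4 * Real.sqrt 2) * OPT d := by
  have hs : d 0 + d 1 + d 2 + d 3 + d 4 = 1 := by
    rw [← Fin.sum_univ_five d]; exact hsum
  have h0 := hd 0; have h1 := hd 1; have h2 := hd 2; have h3 := hd 3; have h4 := hd 4
  -- explicit positions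
  have p0 : pos d 0 = ((0 : ℝ) : AddCircle (1:ℝ)) := by
    simp [pos, show (Finset.Iio (0:Fin 5)) = ∅ from by decide]
  have p1 : pos d 1 = ((d 0 : ℝ) : AddCircle (1:ℝ)) := by
    simp [pos, show (Finset.Iio (1:Fin 5)) = {0} from by decide]
  have p2 : pos d 2 = ((d 0 + d 1 : ℝ) : AddCircle (1:ℝ)) := by
    rw [pos, show (Finset.Iio (2:Fin 5)) = {0,1} from by decide,
      Finset.sum_insert (by decide), Finset.sum_singleton]
  have p3 : pos d 3 = ((d 0 + d 1 + d 2 : ℝ) : AddCircle (1:ℝ)) := by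
    rw [pos, show (Finset.Iio (3:Fin 5)) = {0,1,2} from by decide,
      Finset.sum_insert (by decide), Finset.sum_insert (by decide),
      Finset.sum_singleton, ← add_assoc]
  have p4 : pos d 4 = ((d 0 + d 1 + d 2 + d 3 : ℝ) : AddCircle (1:ℝ)) := by
    rw [pos, show (Finset.Iio (4:Fin 5)) = {0,1,2,3} from by decide,
      Finset.sum_insert (by decide), Finset.sum_insert (by decide),
      Finset.sum_insert (by decide), Finset.sum_singleton, ← add_assoc, ← add_assoc]
  -- generic distance bounds
  have D10 : dist (pos d 1) (pos d 0) ≤ d 0 := by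
    rw [p1, p0]
    refine (dist_coe_le_abs _ _ 0).trans ?_
    rw [abs_le]; constructor <;> push_cast <;> linarith
  have D30 : dist (pos d 3) (pos d 0) ≤ d 3 + d 4 := by
    rw [p3, p0]
    refine (dist_coe_le_abs _ _ 1).trans ?_
    rw [abs_le]; constructor <;> push_cast <;> linarith
  have D40 : dist (pos d 4) (pos d 0) ≤ d 4 := by
    rw [p4, p0]
    refine (dist_coe_le_abs _ _ 1).trans ?_
    rw [abs_le]; constructor <;> push_cast <;> linarith
  have D01 : dist (pos d 0) (pos d 1) ≤ d 0 := by rw [dist_comm]; exact D10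
  have D31 : dist (pos d 3) (pos d 1) ≤ d 0 + d 3 + d 4 := by
    rw [p3, p1]
    refine (dist_coe_le_abs _ _ 1).trans ?_
    rw [abs_le]; constructor <;> push_cast <;> linarith
  have D41 : dist (pos d 4) (pos d 1) ≤ d 0 + d 4 := by
    rw [p4, p1]
    refine (dist_coe_le_abs _ _ 1).trans ?_
    rw [abs_le]; constructor <;> push_cast <;> linarith
  have D43 : dist (pos d 4) (pos d 3) ≤ d 3 := by
    rw [p4, p3]
    refine (dist_coe_le_abs _ _ 0).trans ?_
    rw [abs_le]; constructor <;> push_cast <;> linarith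
  have D03 : dist (pos d 0) (pos d 3) ≤ d 3 + d 4 := by rw [dist_comm]; exact D30
  have D13 : dist (pos d 1) (pos d 3) ≤ d 0 + d 3 + d 4 := by rw [dist_comm]; exact D31
  have D04 : dist (pos d 0) (pos d 4) ≤ d 4 := by rw [dist_comm]; exact D40
  have D14 : dist (pos d 1) (pos d 4) ≤ d 0 + d 4 := by rw [dist_comm]; exact D41
  have D34 : dist (pos d 3) (pos d 4) ≤ d 3 := by rw [dist_comm]; exact D43
  -- half-circle constraints
  have hab : d 0 + d 1 ≤ 1/2 := by
    have := dist_coe_le_abs (d 0 + d 1) 0 1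
    rw [← p2, ← p0, h31] at this
    have h' : |(d 0 + d 1) - 0 - ((1:ℤ):ℝ)| = 1 - (d 0 + d 1) := by
      rw [abs_of_nonpos] <;> push_cast <;> linarith
    rw [h'] at this; linarith
  have hce : d 2 + d 3 ≤ 1/2 := by
    have := dist_coe_le_abs (d 0 + d 1) (d 0 + d 1 + d 2 + d 3) (-1)
    rw [← p2, ← p4, h35] at this
    have h' : |(d 0 + d 1) - (d 0 + d 1 + d 2 + d 3) - ((-1:ℤ):ℝ)| = 1 - (d 2 + d 3) := by
      rw [abs_of_nonneg] <;> push_cast <;> linarith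
    rw [h'] at this; linarith
  -- cost at agent 2 (exact)
  have hC2 : C d 2 = d 0 + 2 * d 1 + 2 * d 2 + d 3 := by
    rw [C, SC, Fin.sum_univ_five, dist_self,
      dist_comm (pos d 0) (pos d 2), dist_comm (pos d 1) (pos d 2),
      dist_comm (pos d 3) (pos d 2), dist_comm (pos d 4) (pos d 2),
      h31, h32, h34, h35]
    ring
  -- cost bounds at other agents
  have hC0 : C d 0 ≤ 2 - d 1 - 2 * d 2 - d 3 := by
    rw [C, SC, Fin.sum_univ_five, dist_self, h31]; linarith
  have hC1 : C d 1 ≤ 2 + d 0 - d 1 - 2 * d 2 - d 3 := by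
    rw [C, SC, Fin.sum_univ_five, dist_self, h32]; linarith
  have hC3 : C d 3 ≤ 2 - d 0 - 2 * d 1 - d 2 + d 3 := by
    rw [C, SC, Fin.sum_univ_five, dist_self, h34]
    linarith
  have hC4 : C d 4 ≤ 2 - d 0 - 2 * d 1 - d 2 := by
    rw [C, SC, Fin.sum_univ_five, dist_self, h35]
    linarith
  -- PCD expansion
  have hPCD : PCD d = d 2 * C d 0 + d 3 * C d 1 + d 4 * C d 2 + d 0 * C d 3 + d 1 * C d 4 := by
    rw [PCD, Fin.sum_univ_five]
    simp only [P, show ((0:Fin 5)+2) = 2 from by decide, show ((1:Fin 5)+2) = 3 from by decide,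
      show ((2:Fin 5)+2) = 4 from by decide, show ((3:Fin 5)+2) = 0 from by decide,
      show ((4:Fin 5)+2) = 1 from by decide]
  have hOPT : OPT d = d 0 + 2 * d 1 + 2 * d 2 + d 3 := by rw [← hopt, hC2]
  have hOPTpos : 0 ≤ OPT d := by rw [hOPT]; linarith
  have hf : d 4 = 1 - d 0 - d 1 - d 2 - d 3 := by linarith
  have hg1 : (0:ℝ) ≤ d 1 + d 2 - 1/2 := by linarith
  have key : PCD d ≤ (4/3) * OPT d := by
    rw [hPCD, hOPT, hC2, hf]
    have m0 := mul_le_mul_of_nonneg_left hC0 h2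
    have m1 := mul_le_mul_of_nonneg_left hC1 h3
    have m3 := mul_le_mul_of_nonneg_left hC3 h0
    have m4 := mul_le_mul_of_nonneg_left hC4 h1
    linarith [m0, m1, m3, m4, hce,
      mul_nonneg hg1 h0, mul_nonneg hg1 h1, mul_nonneg hg1 h2, mul_nonneg hg1 h3,
      mul_nonneg h0 h0, mul_nonneg h1 h1, mul_nonneg h2 h2, mul_nonneg h3 h3,
      mul_nonneg h0 h1, mul_nonneg h0 h2, mul_nonneg h1 h3, mul_nonneg h2 h3]
  have hsqrt : (4:ℝ)/3 ≤ 7 - 4 * Real.sqrt 2 := by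
    have h2' : Real.sqrt 2 ≤ 17/12 := by
      nlinarith [Real.sq_sqrt (by norm_num : (0:ℝ) ≤ 2), Real.sqrt_nonneg 2,
        sq_nonneg (Real.sqrt 2 - 17/12)]
    linarith
  calc PCD d ≤ (4/3) * OPT d := key
    _ ≤ (7 - 4 * Real.sqrt 2) * OPT d := mul_le_mul_of_nonneg_right hsqrt hOPTpos
end

section
/- The optimum is attained at an agent: for every n ≥ 1 and every family of agent locations x : Fin n → AddCircle (1 : ℝ), there exists an index i such that for every point a of the circle, ∑ j, dist(x j, x i) ≤ ∑ j, dist(x j, a). -/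
open Finset

/-- The real-line median lemma, for a fixed reference point `c`:
some data point has sum of distances no larger than `c` does. -/
lemma median_lemma (n : ℕ) (hn : 1 ≤ n) (y : Fin n → ℝ) (c : ℝ) :
    ∃ i : Fin n, ∑ j, |y j - y i| ≤ ∑ j, |y j - c| := by
  classical
  set L : Finset (Fin n) := univ.filter (fun j => y j ≤ c) with hL
  set R : Finset (Fin n) := univ.filter (fun j => ¬ y j ≤ c) with hR
  have hsplit : ∀ g : Fin n → ℝ, ∑ j, g j = ∑ j ∈ L, g j + ∑ j ∈ R, g j := by
    intro g
    rw [hL, hR, Finset.sum_filter_add_sum_filter_not]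
  have hcard : L.card + R.card = n := by
    rw [hL, hR, Finset.card_filter_add_card_filter_not, Finset.card_univ,
      Fintype.card_fin]
  by_cases hc : R.card ≤ L.card
  · -- take the largest data point ≤ c
    have hLne : L.Nonempty := by
      rcases Finset.eq_empty_or_nonempty L with h | h
      · exfalso; rw [h, Finset.card_empty] at hcard hc
        omega
      · exact h
    obtain ⟨i, hiL, hi⟩ := Finset.exists_max_image L y hLne
    have hiy : y i ≤ c := by simpa [hL] using hiL
    set d : ℝ := c - y i with hd
    have hd0 : 0 ≤ d := by simp [hd]; linarith
    refine ⟨i, ?_⟩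
    have h1 : ∑ j ∈ L, |y j - y i| = ∑ j ∈ L, (|y j - c| - d) := by
      apply Finset.sum_congr rfl
      intro j hjL
      have hj1 : y j ≤ y i := hi j hjL
      have hj2 : y j ≤ c := by simpa [hL] using hjL
      rw [abs_of_nonpos (by linarith), abs_of_nonpos (by linarith)]
      simp only [hd]; ring
    have h2 : ∑ j ∈ R, |y j - y i| = ∑ j ∈ R, (|y j - c| + d) := by
      apply Finset.sum_congr rfl
      intro j hjR
      have hj2 : c < y j := by
        have := (Finset.mem_filter.mp hjR).2
        linarith [not_le.mp this]
      rw [abs_of_nonneg (by linarith), abs_of_nonneg (by linarith)]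
      simp only [hd]; ring
    rw [hsplit (fun j => |y j - y i|), hsplit (fun j => |y j - c|), h1, h2,
      Finset.sum_sub_distrib, Finset.sum_add_distrib, Finset.sum_const, Finset.sum_const,
      nsmul_eq_mul, nsmul_eq_mul]
    have : (R.card : ℝ) * d ≤ (L.card : ℝ) * d := by
      apply mul_le_mul_of_nonneg_right _ hd0
      exact_mod_cast hc
    linarith
  · -- take the smallest data point > c
    push_neg at hc
    have hRne : R.Nonempty := by
      rcases Finset.eq_empty_or_nonempty R with h | h
      · exfalso; rw [h, Finset.card_empty] at hc; omega
      · exact h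
    obtain ⟨i, hiR, hi⟩ := Finset.exists_min_image R y hRne
    have hiy : c < y i := by
      have := (Finset.mem_filter.mp hiR).2
      exact not_le.mp this
    set d : ℝ := y i - c with hd
    have hd0 : 0 ≤ d := by simp [hd]; linarith
    refine ⟨i, ?_⟩
    have h1 : ∑ j ∈ R, |y j - y i| = ∑ j ∈ R, (|y j - c| - d) := by
      apply Finset.sum_congr rfl
      intro j hjR
      have hj1 : y i ≤ y j := hi j hjR
      have hj2 : c < y j := by
        have := (Finset.mem_filter.mp hjR).2
        exact not_le.mp this
      rw [abs_of_nonneg (by linarith), abs_of_nonneg (by linarith)]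
      simp only [hd]; ring
    have h2 : ∑ j ∈ L, |y j - y i| = ∑ j ∈ L, (|y j - c| + d) := by
      apply Finset.sum_congr rfl
      intro j hjL
      have hj2 : y j ≤ c := by simpa [hL] using hjL
      rw [abs_of_nonpos (by linarith), abs_of_nonpos (by linarith)]
      simp only [hd]; ring
    rw [hsplit (fun j => |y j - y i|), hsplit (fun j => |y j - c|), h1, h2,
      Finset.sum_sub_distrib, Finset.sum_add_distrib, Finset.sum_const, Finset.sum_const,
      nsmul_eq_mul, nsmul_eq_mul]
    have : (L.card : ℝ) * d ≤ (R.card : ℝ) * d := by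
      apply mul_le_mul_of_nonneg_right _ hd0
      exact_mod_cast hc.le
    linarith

theorem opt_attained_at_agent (n : ℕ) (hn : 1 ≤ n)
    (x : Fin n → AddCircle (1 : ℝ)) :
    ∃ i : Fin n, ∀ a : AddCircle (1 : ℝ),
      ∑ j, dist (x j) (x i) ≤ ∑ j, dist (x j) a := by
  classical
  haveI : Fact ((0:ℝ) < 1) := ⟨one_pos⟩
  -- the social cost function is continuous
  have hcont : Continuous fun a : AddCircle (1:ℝ) => ∑ j, dist (x j) a :=
    continuous_finset_sum _ fun j _ => (continuous_const.dist continuous_id)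
  -- a minimizer exists by compactness
  haveI : Nonempty (AddCircle (1:ℝ)) := ⟨0⟩
  obtain ⟨astar, -, hastar⟩ :=
    (isCompact_univ : IsCompact (Set.univ : Set (AddCircle (1:ℝ)))).exists_isMinOn
      Set.univ_nonempty hcont.continuousOn
  have hmin : ∀ a : AddCircle (1:ℝ), ∑ j, dist (x j) astar ≤ ∑ j, dist (x j) a :=
    fun a => hastar (Set.mem_univ a)
  -- lift astar and all agents to ℝ
  obtain ⟨α, hα⟩ : ∃ α : ℝ, (α : AddCircle (1:ℝ)) = astar :=
    Quotient.exists_rep astar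
  -- choose good lifts of the agents
  have key : ∀ j : Fin n, ∃ y : ℝ, (y : AddCircle (1:ℝ)) = x j ∧
      dist (x j) astar = |y - α| := by
    intro j
    obtain ⟨r, hr⟩ : ∃ r : ℝ, (r : AddCircle (1:ℝ)) = x j - astar :=
      Quotient.exists_rep _
    refine ⟨α + (r - round r), ?_, ?_⟩
    · have h1 : ((r - round r : ℝ) : AddCircle (1:ℝ)) = (r : AddCircle (1:ℝ)) := by
        have : ((round r : ℝ) : AddCircle (1:ℝ)) = 0 := by
          simpa using (AddCircle.coe_eq_zero_iff (1:ℝ)).mpr ⟨round r, by simp⟩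
        push_cast
        rw [sub_eq_add_neg]
        simp [this]
      rw [AddCircle.coe_add, h1, hα, hr]
      abel
    · have h2 : dist (x j) astar = ‖x j - astar‖ := dist_eq_norm _ _
      rw [h2, ← hr]
      have : ‖((r : ℝ) : AddCircle (1:ℝ))‖ = |r - round r| := by
        have := AddCircle.norm_eq (p := (1:ℝ)) (x := r)
        simpa using this
      rw [this]
      ring_nf
  choose y hy hydist using key
  -- apply the median lemma
  obtain ⟨i, hmed⟩ := median_lemma n hn y α
  refine ⟨i, fun a => ?_⟩
  calc ∑ j, dist (x j) (x i) ≤ ∑ j, |y j - y i| := by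
        apply Finset.sum_le_sum
        intro j _
        rw [← hy j, ← hy i, dist_eq_norm]
        rw [← AddCircle.coe_sub]
        simpa using QuotientAddGroup.norm_mk_le_norm (S := AddSubgroup.zmultiples (1:ℝ)) (m := y j - y i)
    _ ≤ ∑ j, |y j - α| := hmed
    _ = ∑ j, dist (x j) astar := by
        apply Finset.sum_congr rfl
        intro j _
        rw [hydist j]
    _ ≤ ∑ j, dist (x j) a := hmin a
end

section
/- Median optimal agent: let n = 2k + 1 be odd and x : Fin n → AddCircle (1 : ℝ) be agent locations. Then there exists an index i such that x i is an optimal location (∀ a, ∑ j, dist(x j, x i) ≤ ∑ j, dist(x j, a)) and there exists a finite set T of indices with i ∉ T, |T| = k, such that every j with r(x j − x i) ∈ (0, 1/2) belongs to T, every j ∈ T satisfies r(x j − x i) ∈ [0, 1/2], and every j ∉ T with j ≠ i satisfies r(x j − x i) = 0 or r(x j − x i) ∈ [1/2, 1). (That is, after assigning ties — agents at the optimal location and agents antipodal to it — agent i has exactly k agents on each side.) -/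
instance : Fact ((0 : ℝ) < 1) := ⟨zero_lt_one⟩

/-- The canonical representative in `[0, 1)` of a point on the unit circle. -/
noncomputable def rep (y : AddCircle (1 : ℝ)) : ℝ :=
  ((AddCircle.equivIco 1 0) y : ℝ)

/-- Distance to the nearest integer. -/
noncomputable def fc (t : ℝ) : ℝ := |t - round t|

lemma fc_norm (t : ℝ) : ‖((t : ℝ) : AddCircle (1 : ℝ))‖ = fc t := by
  rw [AddCircle.norm_eq]; simp [fc]

lemma fc_eq_abs {t : ℝ} (h1 : -(1/2) ≤ t) (h2 : t < 1/2) : fc t = |t| := by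
  have : round t = 0 := round_eq_zero_iff.mpr ⟨h1, h2⟩
  simp [fc, this]

lemma fc_eq_abs_sub_one {t : ℝ} (h1 : 1/2 ≤ t) (h2 : t < 3/2) : fc t = |t - 1| := by
  have : round t = 1 := by
    rw [round_eq]
    have : ⌊t + 1/2⌋ = 1 := by
      apply Int.floor_eq_iff.mpr
      constructor <;> push_cast <;> linarith
    simpa using this
  simp [fc, this]

lemma rep_coe (y : AddCircle (1 : ℝ)) : ((rep y : ℝ) : AddCircle (1 : ℝ)) = y :=
  (AddCircle.equivIco 1 0).symm_apply_apply y

lemma rep_mem (y : AddCircle (1 : ℝ)) : rep y ∈ Set.Ico (0 : ℝ) 1 := by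
  have := ((AddCircle.equivIco 1 0) y).2
  simpa [rep] using this

set_option maxHeartbeats 1000000 in
theorem median_optimal_agent (k : ℕ) (x : Fin (2 * k + 1) → AddCircle (1 : ℝ)) :
    ∃ i : Fin (2 * k + 1),
      (∀ a : AddCircle (1 : ℝ), ∑ j, dist (x j) (x i) ≤ ∑ j, dist (x j) a) ∧
      ∃ T : Finset (Fin (2 * k + 1)),
        i ∉ T ∧ T.card = k ∧
        (∀ j, rep (x j - x i) ∈ Set.Ioo (0 : ℝ) (1 / 2) → j ∈ T) ∧
        (∀ j ∈ T, rep (x j - x i) ∈ Set.Icc (0 : ℝ) (1 / 2)) ∧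
        (∀ j, j ∉ T → j ≠ i →
          rep (x j - x i) = 0 ∨ rep (x j - x i) ∈ Set.Ico (1 / 2 : ℝ) 1) := by
  classical
  set SC : AddCircle (1 : ℝ) → ℝ := fun a => ∑ j, dist (x j) a with hSC
  have hcont : Continuous SC :=
    continuous_finset_sum _ fun j _ => (continuous_const.dist continuous_id)
  obtain ⟨a0, -, hmin⟩ :=
    isCompact_univ.exists_isMinOn Set.univ_nonempty hcont.continuousOn
  have hmin' : ∀ a, SC a0 ≤ SC a := fun a => isMinOn_iff.mp hmin a (Set.mem_univ a)
  set d : Fin (2 * k + 1) → ℝ := fun j => rep (x j - a0) with hdd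
  have hdmem : ∀ j, 0 ≤ d j ∧ d j < 1 := fun j => ⟨(rep_mem _).1, (rep_mem _).2⟩
  have hcoe : ∀ j, ((d j : ℝ) : AddCircle (1 : ℝ)) = x j - a0 := fun j => rep_coe _
  -- distance formula
  have hdist : ∀ (j : Fin (2 * k + 1)) (e : ℝ), dist (x j) (a0 + ((e : ℝ) : AddCircle (1:ℝ))) = fc (d j - e) := by
    intro j e
    rw [dist_eq_norm, ← fc_norm (d j - e)]
    congr 1
    rw [AddCircle.coe_sub, hcoe j]
    abel
  have hdist0 : ∀ j : Fin (2 * k + 1), dist (x j) a0 = fc (d j) := by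
    intro j
    have := hdist j 0
    simpa using this
  -- choice of ε
  set gap : Fin (2 * k + 1) → ℝ := fun j =>
    min (min (if d j = 0 then 1 else d j) (1 - d j)) (if d j = 1/2 then 1 else |d j - 1/2|)
      with hgapdef
  have hgappos : ∀ j, 0 < gap j := by
    intro j
    obtain ⟨h0, h1⟩ := hdmem j
    refine lt_min (lt_min ?_ (by linarith)) ?_
    · split_ifs with h
      · norm_num
      · exact lt_of_le_of_ne h0 (Ne.symm h)
    · split_ifs with h
      · norm_num
      · exact abs_pos.mpr (sub_ne_zero.mpr h)
  have hne : (Finset.univ : Finset (Fin (2 * k + 1))).Nonempty := Finset.univ_nonempty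
  set ε : ℝ := min (Finset.univ.inf' hne gap) (1/2) / 2 with hεdef
  have hε0 : 0 < ε := by
    have : 0 < Finset.univ.inf' hne gap := by
      rw [Finset.lt_inf'_iff]
      exact fun j _ => hgappos j
    have : 0 < min (Finset.univ.inf' hne gap) (1/2) := lt_min this (by norm_num)
    linarith [this]
  have hεhalf : ε < 1/2 := by
    have := min_le_right (Finset.univ.inf' hne gap) (1/2)
    rw [hεdef]; linarith
  have hεgap : ∀ j, ε < gap j := by
    intro j
    have h1 : Finset.univ.inf' hne gap ≤ gap j := Finset.inf'_le _ (Finset.mem_univ j)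
    have h2 := min_le_left (Finset.univ.inf' hne gap) (1/2)
    have := hgappos j
    rw [hεdef]; linarith
  have hεgap1 : ∀ j, d j ≠ 0 → ε < d j := by
    intro j h
    have := hεgap j
    rw [hgapdef] at this
    simp only [if_neg h] at this
    have := lt_of_lt_of_le this (le_trans (min_le_left _ _) (min_le_left _ _))
    exact this
  have hεgap2 : ∀ j, ε < 1 - d j := by
    intro j
    have := hεgap j
    exact lt_of_lt_of_le this (le_trans (min_le_left _ _) (min_le_right _ _))
  have hεgap3 : ∀ j, d j ≠ 1/2 → ε < |d j - 1/2| := by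
    intro j h
    have := hεgap j
    rw [hgapdef] at this
    have h2 := lt_of_lt_of_le this (min_le_right _ _)
    rw [if_neg h] at h2
    exact h2
  -- the two sign computations
  have keyA : ∀ j : Fin (2 * k + 1),
      fc (d j - ε) = fc (d j) + (if d j = 0 ∨ 1/2 < d j then (1:ℝ) else -1) * ε := by
    intro j
    obtain ⟨h0, h1⟩ := hdmem j
    rcases eq_or_ne (d j) 0 with hz | hz
    · rw [if_pos (Or.inl hz), hz]
      rw [fc_eq_abs (by linarith) (by linarith), fc_eq_abs (by norm_num) (by norm_num)]
      rw [abs_of_nonpos (by linarith)]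
      simp
    · rcases lt_trichotomy (d j) (1/2) with hlt | heq | hgt
      · have hε1 := hεgap1 j hz
        have hε3 := hεgap3 j (by linarith)
        rw [abs_of_nonpos (by linarith)] at hε3
        rw [if_neg (by push_neg; exact ⟨hz, by linarith⟩)]
        rw [fc_eq_abs (by linarith) (by linarith), fc_eq_abs (by linarith) (by linarith)]
        rw [abs_of_nonneg (by linarith), abs_of_nonneg (by linarith)]
        ring
      · rw [if_neg (by push_neg; exact ⟨hz, by linarith⟩), heq]
        rw [fc_eq_abs (by linarith) (by linarith),
            fc_eq_abs_sub_one (by norm_num) (by norm_num)]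
        rw [abs_of_nonneg (by linarith), abs_of_nonpos (by norm_num)]
        ring
      · have hε3 := hεgap3 j (by linarith)
        rw [abs_of_nonneg (by linarith)] at hε3
        have hε2 := hεgap2 j
        rw [if_pos (Or.inr hgt)]
        rw [fc_eq_abs_sub_one (by linarith) (by linarith),
            fc_eq_abs_sub_one (by linarith) (by linarith)]
        rw [abs_of_nonpos (by linarith), abs_of_nonpos (by linarith)]
        ring
  have keyB : ∀ j : Fin (2 * k + 1),
      fc (d j + ε) = fc (d j) + (if d j < 1/2 then (1:ℝ) else -1) * ε := by
    intro j
    obtain ⟨h0, h1⟩ := hdmem j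
    rcases lt_trichotomy (d j) (1/2) with hlt | heq | hgt
    · have hε3 := hεgap3 j (by linarith)
      rw [abs_of_nonpos (by linarith)] at hε3
      rw [if_pos hlt]
      rw [fc_eq_abs (by linarith) (by linarith), fc_eq_abs (by linarith) (by linarith)]
      rw [abs_of_nonneg (by linarith), abs_of_nonneg (by linarith)]
      ring
    · rw [if_neg (by linarith), heq]
      rw [fc_eq_abs_sub_one (by linarith) (by linarith),
          fc_eq_abs_sub_one (by norm_num) (by norm_num)]
      rw [abs_of_nonpos (by linarith), abs_of_nonpos (by norm_num)]
      ring
    · have hε2 := hεgap2 j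
      rw [if_neg (by linarith)]
      rw [fc_eq_abs_sub_one (by linarith) (by linarith),
          fc_eq_abs_sub_one (by linarith) (by linarith)]
      rw [abs_of_nonpos (by linarith), abs_of_nonpos (by linarith)]
      ring
  -- derive the two counting inequalities
  have hsumA : (0:ℝ) ≤ ∑ j, (if d j = 0 ∨ 1/2 < d j then (1:ℝ) else -1) := by
    have h := hmin' (a0 + ((ε : ℝ) : AddCircle (1:ℝ)))
    have heq : SC (a0 + ((ε : ℝ) : AddCircle (1:ℝ)))
        = SC a0 + (∑ j, (if d j = 0 ∨ 1/2 < d j then (1:ℝ) else -1)) * ε := by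
      rw [hSC]
      simp only
      rw [Finset.sum_mul, ← Finset.sum_add_distrib]
      refine Finset.sum_congr rfl fun j _ => ?_
      rw [hdist j ε, hdist0 j, keyA j]
    rw [heq] at h
    nlinarith
  have hsumB : (0:ℝ) ≤ ∑ j, (if d j < 1/2 then (1:ℝ) else -1) := by
    have h := hmin' (a0 + (((-ε) : ℝ) : AddCircle (1:ℝ)))
    have heq : SC (a0 + (((-ε) : ℝ) : AddCircle (1:ℝ)))
        = SC a0 + (∑ j, (if d j < 1/2 then (1:ℝ) else -1)) * ε := by
      rw [hSC]
      simp only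
      rw [Finset.sum_mul, ← Finset.sum_add_distrib]
      refine Finset.sum_congr rfl fun j _ => ?_
      rw [hdist j (-ε), hdist0 j, sub_neg_eq_add, keyB j]
    rw [heq] at h
    nlinarith
  -- translate into cardinalities
  have card_ineq : ∀ (P : Fin (2 * k + 1) → Prop) [DecidablePred P],
      (0:ℝ) ≤ ∑ j, (if P j then (1:ℝ) else -1) →
      (Finset.univ.filter (fun j => ¬ P j)).card ≤ (Finset.univ.filter P).card := by
    intro P _ hP
    have : ∑ j, (if P j then (1:ℝ) else -1)
        = ((Finset.univ.filter P).card : ℝ) - ((Finset.univ.filter (fun j => ¬ P j)).card : ℝ) := by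
      rw [Finset.sum_ite, Finset.sum_const, Finset.sum_const]
      simp [sub_eq_add_neg]
    rw [this] at hP
    have h2 : (((Finset.univ.filter (fun j => ¬ P j)).card : ℝ))
        ≤ ((Finset.univ.filter P).card : ℝ) := by linarith
    exact_mod_cast h2
  have hq := card_ineq _ hsumA
  have hr := card_ineq _ hsumB
  set A : Finset (Fin (2 * k + 1)) := Finset.univ.filter (fun j => d j = 0) with hA
  set B : Finset (Fin (2 * k + 1)) := Finset.univ.filter (fun j => 0 < d j ∧ d j < 1/2) with hB
  set H : Finset (Fin (2 * k + 1)) := Finset.univ.filter (fun j => d j = 1/2) with hH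
  set C : Finset (Fin (2 * k + 1)) := Finset.univ.filter (fun j => 1/2 < d j) with hC
  have hACdisj : Disjoint A C := by
    rw [Finset.disjoint_left]
    intro j hj hj'
    rw [hA, Finset.mem_filter] at hj
    rw [hC, Finset.mem_filter] at hj'
    rw [hj.2] at hj'
    linarith [hj'.2]
  have hABdisj : Disjoint A B := by
    rw [Finset.disjoint_left]
    intro j hj hj'
    rw [hA, Finset.mem_filter] at hj
    rw [hB, Finset.mem_filter] at hj'
    rw [hj.2] at hj'
    linarith [hj'.2.1]
  have hHCdisj : Disjoint H C := by
    rw [Finset.disjoint_left]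
    intro j hj hj'
    rw [hH, Finset.mem_filter] at hj
    rw [hC, Finset.mem_filter] at hj'
    rw [hj.2] at hj'
    linarith [hj'.2]
  have hBCdisj : Disjoint B C := by
    rw [Finset.disjoint_left]
    intro j hj hj'
    rw [hB, Finset.mem_filter] at hj
    rw [hC, Finset.mem_filter] at hj'
    linarith [hj.2.2, hj'.2]
  -- filter identities
  have hfq : Finset.univ.filter (fun j => d j = 0 ∨ 1/2 < d j) = A ∪ C := by
    rw [hA, hC, ← Finset.filter_or]
  have hfq' : Finset.univ.filter (fun j => ¬ (d j = 0 ∨ 1/2 < d j)) = B ∪ H := by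
    ext j
    obtain ⟨h0, h1⟩ := hdmem j
    simp only [Finset.mem_filter, Finset.mem_union, Finset.mem_univ, true_and, hB, hH,
      not_or]
    constructor
    · rintro ⟨hz, hh⟩
      push_neg at hh
      rcases lt_or_eq_of_le hh with h | h
      · exact Or.inl ⟨lt_of_le_of_ne h0 (Ne.symm hz), h⟩
      · exact Or.inr h
    · rintro (⟨h2, h3⟩ | h2)
      · exact ⟨by linarith, by linarith⟩
      · exact ⟨by rw [h2]; norm_num, by rw [h2]; exact lt_irrefl _⟩
  have hfr : Finset.univ.filter (fun j => d j < 1/2) = A ∪ B := by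
    ext j
    obtain ⟨h0, h1⟩ := hdmem j
    simp only [Finset.mem_filter, Finset.mem_union, Finset.mem_univ, true_and, hA, hB]
    constructor
    · intro h
      rcases eq_or_lt_of_le h0 with hz | hz
      · exact Or.inl hz.symm
      · exact Or.inr ⟨hz, h⟩
    · rintro (h | ⟨h2, h3⟩)
      · rw [h]; norm_num
      · exact h3
  have hfr' : Finset.univ.filter (fun j => ¬ (d j < 1/2)) = H ∪ C := by
    ext j
    simp only [Finset.mem_filter, Finset.mem_union, Finset.mem_univ, true_and, hH, hC, not_lt]
    constructor
    · intro h
      rcases eq_or_lt_of_le h with hz | hz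
      · exact Or.inl hz.symm
      · exact Or.inr hz
    · rintro (h | h)
      · rw [h]
      · linarith
  rw [hfq, hfq'] at hq
  rw [hfr, hfr'] at hr
  have hBHdisj : Disjoint B H := by
    rw [Finset.disjoint_left]
    intro j hj hj'
    rw [hB, Finset.mem_filter] at hj
    rw [hH, Finset.mem_filter] at hj'
    rw [hj'.2] at hj
    linarith [hj.2.2]
  have hAHdisj : Disjoint A H := by
    rw [Finset.disjoint_left]
    intro j hj hj'
    rw [hA, Finset.mem_filter] at hj
    rw [hH, Finset.mem_filter] at hj'
    rw [hj.2] at hj'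
    norm_num at hj'
  rw [Finset.card_union_of_disjoint hBHdisj, Finset.card_union_of_disjoint hACdisj] at hq
  rw [Finset.card_union_of_disjoint hHCdisj, Finset.card_union_of_disjoint hABdisj] at hr
  have etot : A.card + B.card + (H.card + C.card) = 2 * k + 1 := by
    have := Finset.card_filter_add_card_filter_not
      (s := (Finset.univ : Finset (Fin (2 * k + 1)))) (p := fun j => d j < 1/2)
    rw [hfr, hfr'] at this
    rw [Finset.card_union_of_disjoint hABdisj, Finset.card_union_of_disjoint hHCdisj] at this
    rw [Finset.card_univ] at this
    simp only [Fintype.card_fin] at this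
    exact this
  -- A is nonempty
  have hA1 : 1 ≤ A.card := by omega
  obtain ⟨i, hiA⟩ := Finset.card_pos.mp (show 0 < A.card by omega)
  have hdi : d i = 0 := by
    rw [hA, Finset.mem_filter] at hiA
    exact hiA.2
  have hxi : x i = a0 := by
    have h1 : ((d i : ℝ) : AddCircle (1 : ℝ)) = x i - a0 := hcoe i
    rw [hdi] at h1
    have : x i - a0 = 0 := by rw [← h1]; norm_cast
    exact sub_eq_zero.mp this
  have hdrep : ∀ j, rep (x j - x i) = d j := fun j => by rw [hxi]
  -- construct T
  have hcardAH : ((A.erase i) ∪ H).card = A.card - 1 + H.card := by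
    rw [Finset.card_union_of_disjoint
      (Finset.disjoint_of_subset_left (Finset.erase_subset i A) hAHdisj),
      Finset.card_erase_of_mem hiA]
  have hScard : k - B.card ≤ ((A.erase i) ∪ H).card := by
    rw [hcardAH]; omega
  obtain ⟨S, hSsub, hScardeq⟩ := Finset.exists_subset_card_eq hScard
  have hSmem : ∀ j ∈ S, d j = 0 ∨ d j = 1/2 := by
    intro j hj
    rcases Finset.mem_union.mp (hSsub hj) with h | h
    · have h2 := Finset.mem_of_mem_erase h
      rw [hA, Finset.mem_filter] at h2
      exact Or.inl h2.2
    · rw [hH, Finset.mem_filter] at h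
      exact Or.inr h.2
  have hBmem : ∀ j ∈ B, 0 < d j ∧ d j < 1/2 := by
    intro j hj
    rw [hB, Finset.mem_filter] at hj
    exact hj.2
  have hBSdisj : Disjoint B S := by
    rw [Finset.disjoint_left]
    intro j hj hj'
    obtain ⟨h1, h2⟩ := hBmem j hj
    rcases hSmem j hj' with h | h
    · rw [h] at h1; exact lt_irrefl _ h1
    · rw [h] at h2; exact lt_irrefl _ h2
  refine ⟨i, ?_, B ∪ S, ?_, ?_, ?_, ?_, ?_⟩
  · intro a
    rw [hxi]
    exact hmin' a
  · -- i ∉ T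
    intro hiT
    rcases Finset.mem_union.mp hiT with h | h
    · have := (hBmem i h).1
      rw [hdi] at this
      exact lt_irrefl _ this
    · rcases Finset.mem_union.mp (hSsub h) with h' | h'
      · exact Finset.notMem_erase i A h'
      · have := (Finset.mem_filter.mp h').2
        rw [hdi] at this
        norm_num at this
  · -- card
    rw [Finset.card_union_of_disjoint hBSdisj, hScardeq]
    omega
  · -- all of (0,1/2) in T
    intro j hj
    rw [hdrep j] at hj
    exact Finset.mem_union_left _ (Finset.mem_filter.mpr ⟨Finset.mem_univ j, hj.1, hj.2⟩)
  · -- T within [0,1/2]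
    intro j hj
    rw [hdrep j]
    rcases Finset.mem_union.mp hj with h | h
    · obtain ⟨h1, h2⟩ := hBmem j h
      exact ⟨le_of_lt h1, le_of_lt h2⟩
    · rcases hSmem j h with h' | h' <;> rw [h'] <;> norm_num
  · -- complement
    intro j hjT _
    rw [hdrep j]
    have hjB : j ∉ B := fun h => hjT (Finset.mem_union_left _ h)
    obtain ⟨h0, h1⟩ := hdmem j
    rcases eq_or_lt_of_le h0 with hz | hz
    · exact Or.inl hz.symm
    · rcases lt_or_ge (d j) (1/2) with h | h
      · exact absurd (Finset.mem_filter.mpr ⟨Finset.mem_univ j, hz, h⟩) hjB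
      · exact Or.inr ⟨h, h1⟩
end
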